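/- arXiv:1212.3940 — 7 statements merged into one kernel-verified Lean document; each statement's English description precedes it below -/
import Mathlib

section
/- Let G be a simple connected vertex-transitive graph of odd order n with vertex degree k ≥ 4. Then the independence number of G satisfies α(G) < (n − 1)/2. -/
/-!
Double counting the edges leaving an independent set `s` of a `k`-regular graph (`k > 0`) gives
`#s ≤ #sᶜ`; for odd `n = #V` this yields `#s ≤ (n - 1) / 2`, and applied to the two colour classes
of a 2-colouring it shows that `G` has an odd closed walk.

Suppose `#s = (n - 1) / 2` and take an odd closed walk of length `l`. An independent set occupies
fewer than `l / 2` of its positions, while by vertex-transitivity the images of `s` under the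
automorphisms occupy `l * #s / n` positions on average; hence `l ≥ n`. But a shortest odd closed
walk is a cycle, so it would be a Hamiltonian cycle, and a chord at a vertex of degree `≥ 3`
splits it into two shorter closed walks, one of which is odd.
-/

open Finset SimpleGraph

theorem Finset.two_mul_card_le_of_add_one_mod_notMem {l : ℕ} {I : Finset ℕ}
    (hI : I ⊆ range l) (h : ∀ i ∈ I, (i + 1) % l ∉ I) : 2 * #I ≤ l := by
  have hinj : Set.InjOn (fun i => (i + 1) % l) (range l : Set ℕ) := by
    intro a ha b hb hab
    simp only [coe_range, Set.mem_Iio] at ha hb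
    exact (Nat.ModEq.add_right_cancel' 1 hab).eq_of_lt_of_lt ha hb
  have hmaps : Set.MapsTo (fun i => (i + 1) % l) I (range l \ I : Finset ℕ) := by
    intro i hi
    have hil : i < l := mem_range.mp (hI hi)
    exact mem_sdiff.mpr ⟨mem_range.mpr (Nat.mod_lt _ (by omega)), h i hi⟩
  have := card_le_card_of_injOn _ hmaps (hinj.mono (coe_subset.mpr hI))
  rw [card_sdiff_of_subset hI, card_range] at this
  omega

namespace MulAction

variable (Γ : Type*) {X : Type*} [Group Γ] [Fintype Γ] [MulAction Γ X] [Fintype X]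
  [DecidableEq X] [IsPretransitive Γ X]

theorem card_mul_card_filter_smul_eq (a b : X) :
    Fintype.card X * #{g : Γ | g • a = b} = Fintype.card Γ := by
  have hfiber : ∀ c, #{g : Γ | g • a = c} = #{g : Γ | g • a = b} := by
    intro c
    obtain ⟨τ, rfl⟩ := exists_smul_eq Γ b c
    refine card_nbij' (τ⁻¹ * ·) (τ * ·) ?_ ?_ ?_ ?_ <;> intro g <;>
      simp [mul_smul, inv_smul_eq_iff]
  calc Fintype.card X * #{g : Γ | g • a = b} = ∑ c : X, #{g : Γ | g • a = c} := by
        rw [sum_congr rfl fun c _ => hfiber c, sum_const, card_univ, smul_eq_mul]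
    _ = Fintype.card Γ := (card_eq_sum_card_fiberwise (by simp)).symm

theorem card_mul_card_filter_smul_mem (S : Finset X) (x : X) :
    Fintype.card X * #{g : Γ | g • x ∈ S} = Fintype.card Γ * #S := by
  rw [card_eq_sum_card_fiberwise (f := (· • x)) (t := S) (fun g hg => by simpa using hg),
    mul_sum, sum_congr rfl fun s hs => ?_, sum_const, smul_eq_mul, mul_comm]
  rw [filter_filter, ← card_mul_card_filter_smul_eq Γ x s]
  congr 2
  ext g
  simp only [mem_filter, mem_univ, true_and, and_iff_right_iff_imp]
  rintro rfl
  exact hs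

end MulAction

namespace SimpleGraph

variable {V : Type*} {G : SimpleGraph V}

section Regular

variable [Fintype V] [DecidableEq V] [DecidableRel G.Adj] {k : ℕ}

theorem IsIndepSet.card_le_card_compl (hreg : G.IsRegularOfDegree k) (hk : 0 < k)
    {s : Finset V} (hs : G.IsIndepSet s) : #s ≤ #sᶜ := by
  refine Nat.le_of_mul_le_mul_right (card_mul_le_card_mul G.Adj (m := k) (n := k) ?_ ?_) hk
  · intro a ha
    refine (hreg a).symm.trans_le (card_le_card fun b hb => ?_)
    have hab := (mem_neighborFinset G a b).mp hb
    exact mem_filter.mpr ⟨mem_compl.mpr fun hbs => hs ha hbs hab.ne hab, hab⟩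
  · intro b _
    refine (card_le_card fun a ha => ?_).trans (hreg b).le
    exact (mem_neighborFinset G b a).mpr (mem_filter.mp ha).2.symm

theorem not_colorable_two_of_odd_card (hreg : G.IsRegularOfDegree k) (hk : 0 < k)
    (hodd : Odd (Fintype.card V)) : ¬ G.Colorable 2 := by
  rintro ⟨c⟩
  set A : Finset V := {v | c v = 0}
  have hA : G.IsIndepSet A := by
    intro x hx y hy _ hxy
    simp only [coe_filter, mem_univ, true_and, Set.mem_ofPred_eq, A] at hx hy
    exact c.valid hxy (hx.trans hy.symm)
  have hAc : G.IsIndepSet ↑Aᶜ := by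
    intro x hx y hy _ hxy
    simp only [coe_compl, coe_filter, mem_univ, true_and, Set.mem_compl_iff, Set.mem_ofPred_eq,
      A] at hx hy
    exact c.valid hxy (by omega)
  have h₁ := hA.card_le_card_compl hreg hk
  have h₂ := hAc.card_le_card_compl hreg hk
  rw [compl_compl] at h₂
  have := card_add_card_compl A
  obtain ⟨m, hm⟩ := hodd
  omega

end Regular

/-- Closed walks are encoded by their vertex sequences, indices read modulo `l`, so that rotating
and cutting them is index arithmetic. -/
def IsCyclicWalk (G : SimpleGraph V) (w : ℕ → V) (l : ℕ) : Prop :=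
  ∀ i < l, G.Adj (w i) (w ((i + 1) % l))

theorem Walk.isCyclicWalk_getVert {u : V} (p : G.Walk u u) :
    G.IsCyclicWalk p.getVert p.length := by
  intro i hi
  have hadj := p.adj_getVert_succ hi
  rcases (show i + 1 ≤ p.length from hi).eq_or_lt with h | h
  · rw [h, Nat.mod_self, p.getVert_zero]
    rwa [h, p.getVert_length] at hadj
  · rwa [Nat.mod_eq_of_lt h]

theorem exists_odd_isCyclicWalk_of_odd_card [Fintype V] [DecidableEq V] [DecidableRel G.Adj]
    {k : ℕ} (hreg : G.IsRegularOfDegree k) (hk : 0 < k) (hodd : Odd (Fintype.card V)) :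
    ∃ l, Odd l ∧ ∃ w : ℕ → V, G.IsCyclicWalk w l := by
  obtain ⟨u, p, hp⟩ : ∃ u, ∃ p : G.Walk u u, ¬ Even p.length := by
    simpa [two_colorable_iff_forall_loop_even] using not_colorable_two_of_odd_card hreg hk hodd
  exact ⟨p.length, Nat.not_even_iff_odd.mp hp, p.getVert, p.isCyclicWalk_getVert⟩

namespace IsCyclicWalk

variable {w : ℕ → V} {l : ℕ}

theorem rotate (hw : G.IsCyclicWalk w l) (j : ℕ) :
    G.IsCyclicWalk (fun t => w ((j + t) % l)) l := by
  intro i hi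
  have := hw ((j + i) % l) (Nat.mod_lt _ (by omega))
  simpa only [Nat.add_mod_mod, Nat.mod_add_mod, ← add_assoc] using this

theorem take (hw : G.IsCyclicWalk w l) {m : ℕ} (hm : m < l) (h : G.Adj (w m) (w 0)) :
    G.IsCyclicWalk w (m + 1) := by
  intro i hi
  rcases (Nat.lt_succ_iff.mp hi).eq_or_lt with rfl | him
  · rwa [Nat.mod_self]
  · have := hw i (by omega)
    rw [Nat.mod_eq_of_lt (by omega : i + 1 < l)] at this
    rwa [Nat.mod_eq_of_lt (by omega : i + 1 < m + 1)]

theorem two_mul_card_filter_mem_lt (hw : G.IsCyclicWalk w l) (hl : Odd l) {T : Set V}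
    [DecidablePred (· ∈ T)] (hT : G.IsIndepSet T) : 2 * #{i ∈ range l | w i ∈ T} < l := by
  have hle := two_mul_card_le_of_add_one_mod_notMem
    (I := {i ∈ range l | w i ∈ T}) (filter_subset _ _) ?_
  · obtain ⟨m, rfl⟩ := hl
    omega
  intro i hi hi'
  simp only [mem_filter, mem_range] at hi hi'
  have hadj := hw i hi.1
  exact hT hi.2 hi'.2 hadj.ne hadj

theorem exists_shorter_of_eq_zero (hw : G.IsCyclicWalk w l) (hl : Odd l) {j : ℕ} (hj : 0 < j)
    (hjl : j < l) (h : w j = w 0) : ∃ m < l, Odd m ∧ ∃ w', G.IsCyclicWalk w' m := by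
  have h₁ : G.IsCyclicWalk w (j - 1 + 1) := hw.take (by omega) <| by
    simpa [Nat.sub_add_cancel hj, Nat.mod_eq_of_lt hjl, h] using hw (j - 1) (by omega)
  have h₂ : G.IsCyclicWalk (fun t => w ((j + t) % l)) (l - j - 1 + 1) :=
    (hw.rotate j).take (by omega) <| by
      simpa [Nat.sub_add_cancel (by omega : 1 ≤ l), Nat.mod_eq_of_lt hjl, h,
        show j + (l - j - 1) = l - 1 by omega, Nat.mod_eq_of_lt (by omega : l - 1 < l)]
        using hw (l - 1) (by omega)
  rcases Nat.even_or_odd j with he | ho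
  · refine ⟨_, by omega, ?_, _, h₂⟩
    rw [Nat.sub_add_cancel (by omega)]
    exact Nat.Odd.sub_even hjl.le hl he
  · exact ⟨_, by omega, by rwa [Nat.sub_add_cancel hj], _, h₁⟩

theorem exists_shorter_of_adj (hw : G.IsCyclicWalk w l) (hl : Odd l) {j : ℕ} (hj : 2 ≤ j)
    (hjl : j + 2 ≤ l) (h : G.Adj (w 0) (w j)) : ∃ m < l, Odd m ∧ ∃ w', G.IsCyclicWalk w' m := by
  have h₁ : G.IsCyclicWalk w (j + 1) := hw.take (by omega) h.symm
  have h₂ : G.IsCyclicWalk (fun t => w ((j + t) % l)) (l - j + 1) :=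
    (hw.rotate j).take (by omega) <| by
      simpa [Nat.add_sub_cancel' (by omega : j ≤ l), Nat.mod_eq_of_lt (by omega : j < l)] using h
  rcases Nat.even_or_odd j with he | ho
  · exact ⟨_, by omega, he.add_one, _, h₁⟩
  · exact ⟨_, by omega, (Nat.Odd.sub_odd hl ho).add_one, _, h₂⟩

theorem injOn_of_minimal (hw : G.IsCyclicWalk w l) (hl : Odd l)
    (hmin : ∀ m < l, ¬ (Odd m ∧ ∃ w' : ℕ → V, G.IsCyclicWalk w' m)) :
    Set.InjOn w (Set.Iio l) := by
  suffices ∀ i j, i < j → j < l → w i ≠ w j by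
    intro i hi j hj hij
    by_contra hne
    rcases Nat.lt_or_gt_of_ne hne with h | h
    · exact this i j h hj hij
    · exact this j i h hi hij.symm
  intro i j hij hjl h
  obtain ⟨m, hm, hshort⟩ := (hw.rotate i).exists_shorter_of_eq_zero hl (j := j - i)
    (by omega) (by omega) (by simp [Nat.add_sub_cancel' hij.le, Nat.mod_eq_of_lt hjl,
      Nat.mod_eq_of_lt (hij.trans hjl), h])
  exact hmin m hm hshort

theorem two_mul_mul_card_add_card_le [Fintype V] [DecidableEq V]
    [Fintype (G ≃g G)] [MulAction.IsPretransitive (G ≃g G) V]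
    (hw : G.IsCyclicWalk w l) (hl : Odd l) {S : Finset V} (hS : G.IsIndepSet S) :
    2 * l * #S + Fintype.card V ≤ Fintype.card V * l := by
  set n := Fintype.card V
  set N := Fintype.card (G ≃g G)
  let c (g : G ≃g G) : ℕ := #{i ∈ range l | g • w i ∈ S}
  have hc : ∀ g, 2 * c g + 1 ≤ l := by
    intro g
    have hT : G.IsIndepSet {v | g • v ∈ S} := fun x hx y hy hne hxy =>
      hS hx hy (g.injective.ne hne) (g.map_adj_iff.mpr hxy)
    exact hw.two_mul_card_filter_mem_lt hl hT
  have hsum : n * ∑ g, c g = l * (N * #S) := by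
    calc n * ∑ g, c g = n * ∑ i ∈ range l, #{g : G ≃g G | g • w i ∈ S} :=
          congrArg (n * ·) (sum_card_bipartiteAbove_eq_sum_card_bipartiteBelow _)
      _ = ∑ i ∈ range l, N * #S := by
          rw [mul_sum]
          exact sum_congr rfl fun i _ => MulAction.card_mul_card_filter_smul_mem _ S (w i)
      _ = l * (N * #S) := by rw [sum_const, card_range, smul_eq_mul]
  have hbound : 2 * ∑ g, c g + N ≤ N * l := by
    simpa [mul_sum, sum_add_distrib, mul_comm] using sum_le_sum fun g (_ : g ∈ univ) => hc g
  refine Nat.le_of_mul_le_mul_right (?_ : _ * N ≤ _ * N) Fintype.card_pos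
  nlinarith

end IsCyclicWalk

theorem exists_adj_ne_ne [Fintype V] [DecidableRel G.Adj] {v : V} (hv : 3 ≤ G.degree v)
    (a b : V) : ∃ u, G.Adj v u ∧ u ≠ a ∧ u ≠ b := by
  classical
  by_contra! h
  have hsub : G.neighborFinset v ⊆ {a, b} := by
    intro u hu
    by_cases hua : u = a
    · simp [hua]
    · simp [h u ((mem_neighborFinset G v u).mp hu) hua]
  have := (card_le_card hsub).trans (card_le_two (a := a) (b := b))
  rw [card_neighborFinset_eq_degree] at this
  omega

theorem exists_odd_isCyclicWalk_lt_card [Fintype V] [DecidableRel G.Adj]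
    (hdeg : ∀ v, 3 ≤ G.degree v) (h : ∃ l, Odd l ∧ ∃ w : ℕ → V, G.IsCyclicWalk w l) :
    ∃ l < Fintype.card V, Odd l ∧ ∃ w : ℕ → V, G.IsCyclicWalk w l := by
  classical
  obtain ⟨hl, w, hw⟩ := Nat.find_spec h
  set l := Nat.find h
  have hinj := hw.injOn_of_minimal hl fun m hm => Nat.find_min h hm
  have himage : #((range l).image w) = l := by
    rw [card_image_of_injOn (by simpa using hinj), card_range]
  refine ⟨l, (himage ▸ card_le_univ _).lt_of_ne fun hcard => ?_, hl, w, hw⟩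
  have hsurj : (range l).image w = univ := eq_univ_of_card _ (himage.trans hcard)
  obtain ⟨v, hadj, hne₁, hne₂⟩ := exists_adj_ne_ne (hdeg (w 0)) (w 1) (w (l - 1))
  obtain ⟨j, hj, rfl⟩ := mem_image.mp (hsurj ▸ mem_univ v)
  have hj₀ : j ≠ 0 := by rintro rfl; exact hadj.ne rfl
  have hj₁ : j ≠ 1 := by rintro rfl; exact hne₁ rfl
  have hj₂ : j ≠ l - 1 := by rintro rfl; exact hne₂ rfl
  rw [mem_range] at hj
  obtain ⟨m, hm, hshort⟩ := hw.exists_shorter_of_adj hl (by omega) (by omega) hadj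
  exact Nat.find_min h hm hshort

end SimpleGraph

theorem indep_number_lt_general {V : Type*} [Fintype V] (G : SimpleGraph V) (k : ℕ)
    (hvt : ∀ x y : V, ∃ φ : G ≃g G, φ x = y)
    (hodd : Odd (Fintype.card V))
    (hreg : ∀ v : V, (G.neighborSet v).ncard = k)
    (hk : 4 ≤ k) :
    ∀ s : Set V, (s.Pairwise fun x y => ¬ G.Adj x y) →
      s.ncard < (Fintype.card V - 1) / 2 := by
  classical
  intro s hs
  have : MulAction.IsPretransitive (G ≃g G) V := ⟨hvt⟩
  have : Finite (G ≃g G) := Finite.of_injective _ RelIso.toEquiv_injective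
  have := Fintype.ofFinite (G ≃g G)
  have hreg' : G.IsRegularOfDegree k := fun v => by
    rw [← card_neighborSet_eq_degree, ← Nat.card_eq_fintype_card, Nat.card_coe_set_eq, hreg v]
  have hS : G.IsIndepSet ↑s.toFinset := by simpa using hs
  obtain ⟨l, hln, hl, w, hw⟩ := exists_odd_isCyclicWalk_lt_card (fun v => by rw [hreg' v]; omega)
    (exists_odd_isCyclicWalk_of_odd_card hreg' (by omega) hodd)
  have hcycle := hw.two_mul_mul_card_add_card_le hl hS
  have hcompl := hS.card_le_card_compl hreg' (by omega)
  have hsum := card_add_card_compl s.toFinset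
  rw [Set.ncard_eq_toFinset_card']
  obtain ⟨m, hm⟩ := hodd
  by_contra! h
  have hn : 2 * #s.toFinset + 1 = Fintype.card V := by omega
  nlinarith

/-- A connected vertex-transitive odd graph with degree `k ≥ 4` has independence number
less than `(n - 1) / 2`. -/
theorem indep_number_lt {V : Type*} [Fintype V] (G : SimpleGraph V) (k : ℕ)
    (hconn : G.Connected)
    (hvt : ∀ x y : V, ∃ φ : G ≃g G, φ x = y)
    (hodd : Odd (Fintype.card V))
    (hreg : ∀ v : V, (G.neighborSet v).ncard = k)
    (hk : 4 ≤ k) :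
    ∀ s : Set V, (s.Pairwise fun x y => ¬ G.Adj x y) →
      s.ncard < (Fintype.card V - 1) / 2 :=
  indep_number_lt_general G k hvt hodd hreg hk
end

section
/- Let G be a simple vertex-transitive graph containing a triangle. Then for every subset X of the vertex set of G, the number of isolated vertices (singleton components) of G − X is at most the number of edges of the subgraph of G induced by X. -/
/-!
Let `t` be the number of edges inside the neighbourhood of a vertex (the triangles through it);
by vertex-transitivity `t` is the same at every vertex, and it is positive because `G` has a
triangle. Double count pairs `(v, e)` with `v` a singleton of `G - X` and `e` an edge inside the
neighbourhood of `v`. Each singleton lies in exactly `t` such pairs, and every such `e` lies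
inside `X`. Conversely, the vertices `v` paired with an edge `xy` are common neighbours of `x`
and `y`, and `v ↦ vy` sends them injectively to edges inside the neighbourhood of `x`, so each
edge of `G[X]` lies in at most `t` pairs.
-/

open SimpleGraph

theorem Set.ncard_mul_le_ncard_mul {α β : Type*} {s : Set α} {t : Set β} (hs : s.Finite)
    (ht : t.Finite) (r : α → β → Prop) {m n : ℕ} (hm : ∀ a ∈ s, m ≤ {b ∈ t | r a b}.ncard)
    (hn : ∀ b ∈ t, {a ∈ s | r a b}.ncard ≤ n) : s.ncard * m ≤ t.ncard * n := by
  classical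
  lift s to Finset α using hs
  lift t to Finset β using ht
  simp only [Set.ncard_coe_finset] at hm hn ⊢
  refine Finset.card_mul_le_card_mul r (fun a ha => ?_) (fun b hb => ?_)
  · rw [← Set.ncard_coe_finset, Finset.coe_bipartiteAbove]
    exact hm a ha
  · rw [← Set.ncard_coe_finset, Finset.coe_bipartiteBelow]
    exact hn b hb

namespace SimpleGraph

variable {V W : Type*} {G : SimpleGraph V} {H : SimpleGraph W}

variable (G) in
/-- The edges of `G[N(v)]`, i.e. the triangles of `G` through `v`. -/
def linkEdgeSet (v : V) : Set (Sym2 V) := {e ∈ G.edgeSet | ∀ x ∈ e, G.Adj v x}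

theorem ncard_linkEdgeSet_pos [Finite V] {a b c : V} (hab : G.Adj a b) (hbc : G.Adj b c)
    (hac : G.Adj a c) : 0 < (G.linkEdgeSet a).ncard := by
  refine (Set.ncard_pos).mpr ⟨s(b, c), hbc, fun x hx => ?_⟩
  rcases Sym2.mem_iff.mp hx with rfl | rfl
  exacts [hab, hac]

theorem Embedding.ncard_linkEdgeSet_le [Finite W] (φ : G ↪g H) (v : V) :
    (G.linkEdgeSet v).ncard ≤ (H.linkEdgeSet (φ v)).ncard := by
  refine Set.ncard_le_ncard_of_injOn (Sym2.map φ) (fun e ⟨he, hv⟩ => ⟨?_, ?_⟩)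
    (Sym2.map.injective φ.injective).injOn
  · induction e using Sym2.ind with
    | _ x y => exact φ.map_adj_iff.mpr he
  · intro x hx
    obtain ⟨y, hy, rfl⟩ := Sym2.mem_map.mp hx
    exact φ.map_adj_iff.mpr (hv y hy)

theorem ncard_commonNeighbors_le_ncard_linkEdgeSet [Finite V] {x y : V} (hxy : G.Adj x y) :
    (G.commonNeighbors x y).ncard ≤ (G.linkEdgeSet x).ncard := by
  refine Set.ncard_le_ncard_of_injOn (fun v => s(v, y)) (fun v ⟨hxv, hyv⟩ => ⟨hyv.symm, ?_⟩)
    (fun v _ w _ h => Sym2.congr_left.mp h)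
  intro z hz
  rcases Sym2.mem_iff.mp hz with rfl | rfl
  exacts [hxv, hxy]

theorem linkEdgeSet_subset_of_neighborSet_subset {v : V} {X : Set V}
    (hv : ∀ w, G.Adj v w → w ∈ X) :
    G.linkEdgeSet v ⊆ {e ∈ G.edgeSet | ∀ x ∈ e, x ∈ X} :=
  fun _ ⟨he, hadj⟩ => ⟨he, fun x hx => hv x (hadj x hx)⟩

end SimpleGraph

/-- In a vertex-transitive graph with a triangle, for every vertex subset `X` the number of
isolated vertices (singleton components) of `G - X` is at most the number of edges of the
subgraph induced by `X`. -/
theorem singletons_le_edges {V : Type*} [Fintype V] (G : SimpleGraph V)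
    (hvt : ∀ x y : V, ∃ φ : G ≃g G, φ x = y)
    (htri : ∃ a b c : V, G.Adj a b ∧ G.Adj b c ∧ G.Adj a c) :
    ∀ X : Set V,
      {v : V | v ∉ X ∧ ∀ w : V, G.Adj v w → w ∈ X}.ncard ≤
        {e ∈ G.edgeSet | ∀ x ∈ e, x ∈ X}.ncard := by
  intro X
  obtain ⟨a, b, c, hab, hbc, hac⟩ := htri
  have ht_le : ∀ u v, (G.linkEdgeSet u).ncard ≤ (G.linkEdgeSet v).ncard := fun u v => by
    obtain ⟨φ, rfl⟩ := hvt u v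
    exact φ.toEmbedding.ncard_linkEdgeSet_le u
  refine Nat.le_of_mul_le_mul_right (Set.ncard_mul_le_ncard_mul (Set.toFinite _)
    (Set.toFinite _) (fun v e => ∀ x ∈ e, G.Adj v x) (m := (G.linkEdgeSet a).ncard)
    (n := (G.linkEdgeSet a).ncard) ?_ ?_) (ncard_linkEdgeSet_pos hab hbc hac)
  · rintro v ⟨-, hv⟩
    refine (ht_le a v).trans (Set.ncard_le_ncard fun e he => ?_)
    exact ⟨linkEdgeSet_subset_of_neighborSet_subset hv he, he.2⟩
  · rintro e ⟨he, -⟩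
    induction e using Sym2.ind with
    | _ x y =>
      calc _ ≤ (G.commonNeighbors x y).ncard := Set.ncard_le_ncard fun v hv =>
            ⟨(hv.2 x (Sym2.mem_mk_left x y)).symm, (hv.2 y (Sym2.mem_mk_right x y)).symm⟩
        _ ≤ (G.linkEdgeSet x).ncard := ncard_commonNeighbors_le_ncard_linkEdgeSet he
        _ ≤ (G.linkEdgeSet a).ncard := ht_le x a
end

section
/- Let G be a simple connected 4-regular vertex-transitive triangle-free graph of odd order. Then G has no two distinct vertices u and v with N(u) = N(v). -/
/-!
Call two vertices twins when they have the same neighbourhood. Automorphisms permute twin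
classes, so in a vertex-transitive graph all twin classes have a common size `k`. The vertex set
is a disjoint union of twin classes, and so is every neighbourhood (a twin of a neighbour of `x`
is again a neighbour of `x`). Hence `k` divides both the odd order and the degree `4`, so
`k = 1`: no two distinct vertices are twins.
-/

open SimpleGraph

theorem Set.dvd_ncard_of_forall_ncard_fiber_eq {α β : Type*} (f : α → β) {s : Set α}
    (hs : s.Finite) {k : ℕ} (h : ∀ a ∈ s, {b ∈ s | f b = f a}.ncard = k) : k ∣ s.ncard := by
  classical
  lift s to Finset α using hs
  rw [Set.ncard_coe_finset, Finset.card_eq_sum_card_image f s, Finset.sum_const_nat]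
  · exact dvd_mul_left _ _
  · simp only [Finset.mem_image]
    rintro _ ⟨a, ha, rfl⟩
    rw [← h a ha, ← Set.ncard_coe_finset, Finset.coe_filter]
    rfl

namespace SimpleGraph

variable {V : Type*} (G : SimpleGraph V)

def twinClass (x : V) : Set V := {y | G.neighborSet y = G.neighborSet x}

theorem mem_twinClass_self (x : V) : x ∈ G.twinClass x := rfl

theorem twinClass_image_iso (φ : G ≃g G) (x : V) : φ '' G.twinClass x = G.twinClass (φ x) := by
  ext z
  obtain ⟨y, rfl⟩ := φ.surjective z
  simp only [twinClass, Set.mem_ofPred_eq, φ.injective.mem_set_image, ← Iso.image_neighborSet,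
    Set.image_eq_image φ.injective]

theorem ncard_twinClass_eq_of_transitive (hvt : ∀ x y : V, ∃ φ : G ≃g G, φ x = y)
    (x y : V) : (G.twinClass x).ncard = (G.twinClass y).ncard := by
  obtain ⟨φ, rfl⟩ := hvt x y
  rw [← twinClass_image_iso, Set.ncard_image_of_injective _ φ.injective]

theorem twinClass_subset_neighborSet {x w : V} (hw : G.Adj x w) :
    G.twinClass w ⊆ G.neighborSet x := fun y hy => by
  rw [mem_neighborSet, adj_comm, ← mem_neighborSet, hy]
  exact hw.symm

theorem dvd_ncard_of_twinClass_subset {s : Set V} (hs : s.Finite)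
    (hsat : ∀ a ∈ s, G.twinClass a ⊆ s) {k : ℕ} (hk : ∀ a, (G.twinClass a).ncard = k) :
    k ∣ s.ncard :=
  Set.dvd_ncard_of_forall_ncard_fiber_eq G.neighborSet hs fun a ha => by
    rw [← hk a, ← Set.inter_eq_right.mpr (hsat a ha)]
    rfl

end SimpleGraph

theorem no_false_twins_general {V : Type*} [Fintype V] (G : SimpleGraph V)
    (hvt : ∀ x y : V, ∃ φ : G ≃g G, φ x = y)
    (hreg : ∀ v : V, (G.neighborSet v).ncard = 4)
    (hodd : Odd (Fintype.card V)) :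
    ¬ ∃ u v : V, u ≠ v ∧ G.neighborSet u = G.neighborSet v := by
  rintro ⟨u, v, huv, hN⟩
  set k := (G.twinClass u).ncard
  have hk (x : V) : (G.twinClass x).ncard = k :=
    G.ncard_twinClass_eq_of_transitive hvt x u
  have hk_odd : Odd k := by
    refine hodd.of_dvd_nat ?_
    rw [← Nat.card_eq_fintype_card, ← Set.ncard_univ]
    exact G.dvd_ncard_of_twinClass_subset Set.finite_univ (fun _ _ => Set.subset_univ _) hk
  have hk_four : k ∣ 4 := by
    rw [← hreg u]
    exact G.dvd_ncard_of_twinClass_subset (Set.toFinite _)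
      (fun _ hw => G.twinClass_subset_neighborSet hw) hk
  have hk_two : 2 ≤ k := by
    rw [← Set.ncard_pair huv]
    exact Set.ncard_le_ncard (Set.pair_subset (G.mem_twinClass_self u) hN.symm) (Set.toFinite _)
  have hk_le : k ≤ 4 := Nat.le_of_dvd four_pos hk_four
  obtain ⟨m, hm⟩ := hk_odd
  interval_cases k <;> omega

/-- A connected 4-regular vertex-transitive triangle-free odd graph has no two distinct
vertices `u` and `v` with `N(u) = N(v)`. -/
theorem no_false_twins {V : Type*} [Fintype V] (G : SimpleGraph V)
    (hconn : G.Connected)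
    (hvt : ∀ x y : V, ∃ φ : G ≃g G, φ x = y)
    (hreg : ∀ v : V, (G.neighborSet v).ncard = 4)
    (htf : G.CliqueFree 3)
    (hodd : Odd (Fintype.card V)) :
    ¬ ∃ u v : V, u ≠ v ∧ G.neighborSet u = G.neighborSet v :=
  no_false_twins_general G hvt hreg hodd
end

section
/- Let G be a simple connected vertex-transitive graph of odd order with vertex degree k = 4 and girth g = 4. Then for each edge e of G, there are at least two distinct quadrangles (4-cycles) of G containing e, and there is another edge e' adjacent to e such that the number of quadrangles of G containing e' equals the number of quadrangles of G containing e. -/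
open SimpleGraph

/-- `Q` is the edge set of a quadrangle (4-cycle) of `G`. -/
def IsQuadrangle {V : Type*} (G : SimpleGraph V) (Q : Set (Sym2 V)) : Prop :=
  ∃ a b c d : V, [a, b, c, d].Nodup ∧
    G.Adj a b ∧ G.Adj b c ∧ G.Adj c d ∧ G.Adj d a ∧
    Q = {s(a, b), s(b, c), s(c, d), s(d, a)}

/-!
Write `q e` for the number of quadrangles through the edge `e`. It is invariant under
automorphisms, so by vertex-transitivity the values of `q` on the four edges at a vertex do not
depend on the vertex. Counting incident (vertex, edge) pairs then gives
`|V| · #{w ~ v | q vw = m} = 2 · #{e | q e = m}`, and as `|V|` is odd every value occurs an even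
number of times at each vertex: this is the second claim. In the same way
`|V| · ∑_{w ~ v} q vw = 2 ∑_e q e = 8 · #quadrangles`, so `8 ∣ ∑_{w ~ v} q vw`.

For the first claim suppose `q uw ≤ 1`, pair `w` with a neighbour `y` of `u` with `q uy = q uw`,
and let `x₁, x₂` be the other two neighbours of `u`. Sorting the quadrangles through `uz` by the
second neighbour of `u` on them gives
`q uw + q uy + 2 λ(x₁, x₂) = q ux₁ + q ux₂ + 2 λ(w, y)`, where `λ(a, b)` counts the common
neighbours of `a` and `b` other than `u`. With `λ(w, y) ≤ q uw`, `λ(x₁, x₂) ≤ 3`, the divisibility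
by `8` and the existence of some quadrangle, this forces `λ(x₁, x₂) ≥ 2`. Then `x₁` and `x₂` have
three common neighbours, each joined to `x₁` by an edge in at least two quadrangles, whereas at
`u` only the two edges `ux₁`, `ux₂` can lie in two quadrangles.
-/

open Finset

theorem Finset.exists_nodup_eq_of_card_eq_four {α : Type*} [DecidableEq α] {s : Finset α}
    {w y : α} (hs : #s = 4) (hw : w ∈ s) (hy : y ∈ s) (hwy : w ≠ y) :
    ∃ x₁ x₂, [w, y, x₁, x₂].Nodup ∧ s = {w, y, x₁, x₂} := by
  have hy' : y ∈ s.erase w := mem_erase.2 ⟨hwy.symm, hy⟩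
  obtain ⟨x₁, x₂, hx, hrest⟩ : ∃ x₁ x₂, x₁ ≠ x₂ ∧ (s.erase w).erase y = {x₁, x₂} := by
    rw [← card_eq_two, card_erase_of_mem hy', card_erase_of_mem hw, hs]
  have hx₁ : x₁ ∈ (s.erase w).erase y := by simp [hrest]
  have hx₂ : x₂ ∈ (s.erase w).erase y := by simp [hrest]
  simp only [mem_erase] at hx₁ hx₂
  refine ⟨x₁, x₂, by simp [*, hx₁.1.symm, hx₂.1.symm, hx₁.2.1.symm, hx₂.2.1.symm], ?_⟩
  rw [← hrest, insert_erase hy', insert_erase hw]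

namespace SimpleGraph

variable {V W : Type*} {G : SimpleGraph V}

def IsVertexTransitive (G : SimpleGraph V) : Prop :=
  ∀ x y : V, ∃ φ : G ≃g G, φ x = y

section EdgeFunctions

variable [Fintype V] [DecidableRel G.Adj]

theorem sum_sum_neighborFinset_eq_two_nsmul [DecidableEq V] {M : Type*} [AddCommMonoid M]
    (f : Sym2 V → M) :
    ∑ v, ∑ w ∈ G.neighborFinset v, f s(v, w) = 2 • ∑ e ∈ G.edgeFinset, f e := by
  calc ∑ v, ∑ w ∈ G.neighborFinset v, f s(v, w) = ∑ d : G.Dart, f d.edge := by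
        rw [← Finset.sum_fiberwise univ (fun d : G.Dart => d.fst)]
        refine Finset.sum_congr rfl fun v _ => ?_
        rw [dart_fst_fiber, sum_image fun _ _ _ _ h => G.dartOfNeighborSet_injective v h]
        exact Finset.sum_subtype _ (by simp) _
    _ = ∑ e ∈ G.edgeFinset, ∑ d : G.Dart with d.edge = e, f e := by
        rw [sum_fiberwise_of_maps_to' fun d _ => mem_edgeFinset.2 d.edge_mem]
    _ = 2 • ∑ e ∈ G.edgeFinset, f e := by
        rw [smul_sum]
        refine Finset.sum_congr rfl fun e he => ?_
        rw [sum_const, G.dart_edge_fiber_card e (mem_edgeFinset.1 he)]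

namespace IsVertexTransitive

theorem sum_neighborFinset_eq {M : Type*} [AddCommMonoid M] (hG : G.IsVertexTransitive)
    {f : Sym2 V → M} (hf : ∀ (φ : G ≃g G) e, f (e.map φ) = f e) (u v : V) :
    ∑ w ∈ G.neighborFinset u, f s(u, w) = ∑ w ∈ G.neighborFinset v, f s(v, w) := by
  obtain ⟨φ, rfl⟩ := hG u v
  refine Finset.sum_equiv φ.toEquiv (fun w => ?_) (fun w _ => ?_)
  · simpa using φ.map_adj_iff.symm
  · rw [← hf φ]; rfl

theorem card_filter_neighborFinset_eq (hG : G.IsVertexTransitive) {P : Sym2 V → Prop}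
    [DecidablePred P] (hP : ∀ (φ : G ≃g G) e, P (e.map φ) ↔ P e) (u v : V) :
    #{w ∈ G.neighborFinset u | P s(u, w)} = #{w ∈ G.neighborFinset v | P s(v, w)} := by
  simp only [card_filter]
  exact hG.sum_neighborFinset_eq (f := fun e => if P e then 1 else 0) (fun φ e => by simp only [hP])
    u v

theorem card_mul_sum_neighborFinset_eq (hG : G.IsVertexTransitive)
    {f : Sym2 V → ℕ} (hf : ∀ (φ : G ≃g G) e, f (e.map φ) = f e) (v : V) :
    Fintype.card V * ∑ w ∈ G.neighborFinset v, f s(v, w) = 2 * ∑ e ∈ G.edgeFinset, f e := by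
  classical
  rw [← smul_eq_mul, ← card_univ, ← sum_const, ← smul_eq_mul,
    ← sum_sum_neighborFinset_eq_two_nsmul]
  exact Finset.sum_congr rfl fun u _ => hG.sum_neighborFinset_eq hf v u

theorem even_card_filter_neighborFinset (hG : G.IsVertexTransitive)
    (hodd : Odd (Fintype.card V)) {P : Sym2 V → Prop} [DecidablePred P]
    (hP : ∀ (φ : G ≃g G) e, P (e.map φ) ↔ P e) (v : V) :
    Even #{w ∈ G.neighborFinset v | P s(v, w)} := by
  have h := hG.card_mul_sum_neighborFinset_eq (f := fun e => if P e then 1 else 0)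
    (fun φ e => by simp only [hP]) v
  rw [← card_filter] at h
  have heven : Even (Fintype.card V * #{w ∈ G.neighborFinset v | P s(v, w)}) :=
    ⟨_, h.trans (two_mul _)⟩
  exact (Nat.even_mul.1 heven).resolve_left (Nat.not_even_iff_odd.2 hodd)

theorem exists_adj_ne_eq {α : Type*} (hG : G.IsVertexTransitive) (hodd : Odd (Fintype.card V))
    {f : Sym2 V → α} (hf : ∀ (φ : G ≃g G) e, f (e.map φ) = f e) {u w : V} (huw : G.Adj u w) :
    ∃ w', G.Adj u w' ∧ w' ≠ w ∧ f s(u, w') = f s(u, w) := by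
  classical
  set S : Finset V := {z ∈ G.neighborFinset u | f s(u, z) = f s(u, w)}
  have hw : w ∈ S := by simpa [S]
  obtain ⟨k, hk⟩ : Even #S :=
    hG.even_card_filter_neighborFinset hodd (P := (f · = f s(u, w))) (fun φ e => by rw [hf]) u
  obtain ⟨w', hw', hne⟩ := exists_mem_ne (s := S) (by have := card_pos.2 ⟨w, hw⟩; omega) w
  exact ⟨w', by simpa using (mem_filter.1 hw').1, hne, (mem_filter.1 hw').2⟩

end IsVertexTransitive

end EdgeFunctions

def IsQuadrangleWith (G : SimpleGraph V) (Q : Set (Sym2 V)) (a b c d : V) : Prop :=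
  [a, b, c, d].Nodup ∧ G.Adj a b ∧ G.Adj b c ∧ G.Adj c d ∧ G.Adj d a ∧
    Q = {s(a, b), s(b, c), s(c, d), s(d, a)}

namespace IsQuadrangleWith

variable {Q : Set (Sym2 V)} {a b c d : V}

theorem eq (h : G.IsQuadrangleWith Q a b c d) : Q = {s(a, b), s(b, c), s(c, d), s(d, a)} :=
  h.2.2.2.2.2

theorem rotate (h : G.IsQuadrangleWith Q a b c d) : G.IsQuadrangleWith Q b c d a := by
  obtain ⟨hnd, hab, hbc, hcd, hda, rfl⟩ := h
  refine ⟨(List.rotate_perm [a, b, c, d] 1).nodup_iff.2 hnd, hbc, hcd, hda, hab, ?_⟩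
  ext; simp only [Set.mem_insert_iff, Set.mem_singleton_iff]; tauto

theorem reverse (h : G.IsQuadrangleWith Q a b c d) : G.IsQuadrangleWith Q d c b a := by
  obtain ⟨hnd, hab, hbc, hcd, hda, rfl⟩ := h
  refine ⟨List.nodup_reverse.2 hnd, hcd.symm, hbc.symm, hab.symm, hda.symm, ?_⟩
  rw [Sym2.eq_swap (a := d), Sym2.eq_swap (a := c), Sym2.eq_swap (a := b), Sym2.eq_swap (a := a)]
  ext; simp only [Set.mem_insert_iff, Set.mem_singleton_iff]; tauto

theorem unique {v x c d c' d' : V} (h : G.IsQuadrangleWith Q v x d c)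
    (h' : G.IsQuadrangleWith Q v x d' c') : c = c' ∧ d = d' := by
  obtain ⟨hnd, -, -, -, -, rfl⟩ := h
  obtain ⟨hnd', -, -, -, -, hQ⟩ := h'
  have hc : s(c, v) ∈ ({s(v, x), s(x, d'), s(d', c'), s(c', v)} : Set (Sym2 V)) := by
    rw [← hQ]; simp
  have hd : s(x, d) ∈ ({s(v, x), s(x, d'), s(d', c'), s(c', v)} : Set (Sym2 V)) := by
    rw [← hQ]; simp
  simp only [List.nodup_cons, List.mem_cons, List.not_mem_nil] at hnd hnd'
  simp only [Set.mem_insert_iff, Set.mem_singleton_iff, Sym2.eq_iff] at hc hd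
  grind

end IsQuadrangleWith

variable {Q : Set (Sym2 V)}

theorem _root_.IsQuadrangle.map {G' : SimpleGraph W} (φ : G ≃g G') (hQ : IsQuadrangle G Q) :
    IsQuadrangle G' (Sym2.map φ '' Q) := by
  obtain ⟨a, b, c, d, hnd, hab, hbc, hcd, hda, rfl⟩ := hQ
  refine ⟨φ a, φ b, φ c, φ d, hnd.map_on fun _ _ _ _ h => φ.injective h, φ.map_adj_iff.2 hab,
    φ.map_adj_iff.2 hbc, φ.map_adj_iff.2 hcd, φ.map_adj_iff.2 hda, ?_⟩
  simp [Set.image_insert_eq]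

/-- Rotating and reflecting `a b c d` moves any edge `s(v, x)` of the quadrangle to `s(a, b)`. -/
theorem _root_.IsQuadrangle.exists_isQuadrangleWith {v x : V} (hQ : IsQuadrangle G Q)
    (he : s(v, x) ∈ Q) : ∃ c d, G.IsQuadrangleWith Q v x d c := by
  obtain ⟨a, b, c, d, h⟩ : ∃ a b c d, G.IsQuadrangleWith Q a b c d := hQ
  have h₁ := h.rotate
  have h₂ := h₁.rotate
  have h₃ := h₂.rotate
  have h₄ := h.reverse
  have h₅ := h₁.reverse
  have h₆ := h₂.reverse
  have h₇ := h₃.reverse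
  rw [h.eq] at he
  simp only [Set.mem_insert_iff, Set.mem_singleton_iff, Sym2.eq_iff] at he
  rcases he with (⟨rfl, rfl⟩ | ⟨rfl, rfl⟩) | (⟨rfl, rfl⟩ | ⟨rfl, rfl⟩) |
    (⟨rfl, rfl⟩ | ⟨rfl, rfl⟩) | (⟨rfl, rfl⟩ | ⟨rfl, rfl⟩) <;>
    first
      | exact ⟨_, _, h⟩ | exact ⟨_, _, h₁⟩ | exact ⟨_, _, h₂⟩ | exact ⟨_, _, h₃⟩
      | exact ⟨_, _, h₄⟩ | exact ⟨_, _, h₅⟩ | exact ⟨_, _, h₆⟩ | exact ⟨_, _, h₇⟩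

theorem _root_.IsQuadrangle.ncard_eq_four (hQ : IsQuadrangle G Q) : Q.ncard = 4 := by
  obtain ⟨a, b, c, d, hnd, -, -, -, -, rfl⟩ := hQ
  simp only [List.nodup_cons, List.mem_cons, List.not_mem_nil] at hnd
  rw [Set.ncard_insert_of_notMem, Set.ncard_insert_of_notMem, Set.ncard_pair] <;>
    simp only [Set.mem_insert_iff, Set.mem_singleton_iff, Sym2.eq_iff, ne_eq] <;> grind

theorem _root_.IsQuadrangle.subset_edgeSet (hQ : IsQuadrangle G Q) : Q ⊆ G.edgeSet := by
  obtain ⟨a, b, c, d, -, hab, hbc, hcd, hda, rfl⟩ := hQ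
  simp [Set.insert_subset_iff, hab, hbc, hcd, hda]

theorem exists_isQuadrangle_of_girth_eq_four (h : G.girth = 4) : ∃ Q, IsQuadrangle G Q := by
  have hcyc : ¬G.IsAcyclic := fun hG => by simp [girth_eq_zero.2 hG] at h
  obtain ⟨a, w, hw, hlen⟩ := exists_girth_eq_length.2 hcyc
  rw [h] at hlen
  rcases w with _ | ⟨hab, _ | ⟨hbc, _ | ⟨hcd, _ | ⟨hda, _ | ⟨_, _⟩⟩⟩⟩⟩ <;>
    simp only [Walk.length_cons, Walk.length_nil] at hlen <;> try omega
  exact ⟨_, _, _, _, _, hw.support_nodup, hbc, hcd, hda, hab, rfl⟩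

noncomputable def quadCount (G : SimpleGraph V) (e : Sym2 V) : ℕ :=
  {Q : Set (Sym2 V) | IsQuadrangle G Q ∧ e ∈ Q}.ncard

theorem quadCount_map {G' : SimpleGraph W} (φ : G ≃g G') (e : Sym2 V) :
    G'.quadCount (e.map φ) = G.quadCount e := by
  have hinj : Function.Injective (Sym2.map φ) := Sym2.map.injective φ.injective
  unfold quadCount
  rw [← Set.ncard_image_of_injective _ (Set.image_injective.2 hinj)]
  congr 1
  ext Q'
  constructor
  · rintro ⟨hQ', he⟩
    refine ⟨Sym2.map φ.symm '' Q', ⟨hQ'.map φ.symm, _, he, by simp [Sym2.map_map]⟩, ?_⟩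
    simp [Set.image_image, Sym2.map_map]
  · rintro ⟨Q, ⟨hQ, he⟩, rfl⟩
    exact ⟨hQ.map φ, Set.mem_image_of_mem _ he⟩

theorem _root_.IsQuadrangle.quadCount_pos [Finite V] {e : Sym2 V} (hQ : IsQuadrangle G Q)
    (he : e ∈ Q) : 0 < G.quadCount e :=
  Set.ncard_pos (Set.toFinite _) |>.2 ⟨Q, hQ, he⟩

section Counting

variable [Fintype V] [DecidableRel G.Adj]

theorem sum_quadCount_edgeFinset :
    ∑ e ∈ G.edgeFinset, G.quadCount e = 4 * {Q | IsQuadrangle G Q}.ncard := by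
  classical
  let t : Finset (Set (Sym2 V)) := {Q | IsQuadrangle G Q}
  have habove : ∀ e, G.quadCount e = #(t.bipartiteAbove (· ∈ ·) e) := fun e => by
    rw [quadCount, ← Set.ncard_coe_finset]; congr 1; ext; simp [t, bipartiteAbove]
  have hbelow : ∀ Q ∈ t, #(G.edgeFinset.bipartiteBelow (· ∈ ·) Q) = 4 := fun Q hQ => by
    have hQ : IsQuadrangle G Q := by simpa [t] using hQ
    rw [← hQ.ncard_eq_four, ← Set.ncard_coe_finset]; congr 1; ext
    simpa [bipartiteBelow] using fun h => hQ.subset_edgeSet h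
  rw [sum_congr rfl fun e _ => habove e, sum_card_bipartiteAbove_eq_sum_card_bipartiteBelow,
    sum_congr rfl hbelow, sum_const, smul_eq_mul, mul_comm, ← Set.ncard_coe_finset]
  congr; ext; simp [t]

theorem IsVertexTransitive.eight_dvd_sum_quadCount (hG : G.IsVertexTransitive)
    (hodd : Odd (Fintype.card V)) (v : V) :
    8 ∣ ∑ w ∈ G.neighborFinset v, G.quadCount s(v, w) := by
  have h := hG.card_mul_sum_neighborFinset_eq (fun φ e => quadCount_map φ e) v
  rw [sum_quadCount_edgeFinset, ← mul_assoc] at h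
  exact ((Nat.coprime_two_left.2 hodd).pow_left 3).dvd_of_dvd_mul_left ⟨_, h⟩

theorem IsVertexTransitive.sum_quadCount_pos (hG : G.IsVertexTransitive) (hQ : IsQuadrangle G Q)
    (u : V) : 0 < ∑ w ∈ G.neighborFinset u, G.quadCount s(u, w) := by
  obtain ⟨a, b, c, d, -, hab, -, -, -, hQe⟩ := id hQ
  rw [hG.sum_neighborFinset_eq (fun φ e => quadCount_map φ e) u a]
  exact (hQ.quadCount_pos (hQe ▸ Set.mem_insert _ _)).trans_le <|
    single_le_sum (f := fun w => G.quadCount s(a, w)) (fun _ _ => Nat.zero_le _)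
      ((G.mem_neighborFinset a b).2 hab)

variable [DecidableEq V]

variable (G) in
def commonNeighborsExcept (v x y : V) : Finset V :=
  (G.neighborFinset x ∩ G.neighborFinset y).erase v

theorem mem_commonNeighborsExcept {v x y w : V} :
    w ∈ G.commonNeighborsExcept v x y ↔ w ≠ v ∧ G.Adj x w ∧ G.Adj y w := by
  simp [commonNeighborsExcept]

theorem commonNeighborsExcept_comm (v x y : V) :
    G.commonNeighborsExcept v x y = G.commonNeighborsExcept v y x := by
  rw [commonNeighborsExcept, inter_comm, commonNeighborsExcept]

theorem card_commonNeighborsExcept_add_one_le_degree {v x : V} (hxv : G.Adj x v) (y : V) :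
    #(G.commonNeighborsExcept v x y) + 1 ≤ G.degree x := by
  rw [← card_neighborFinset_eq_degree, ← card_erase_add_one ((G.mem_neighborFinset x v).2 hxv)]
  exact Nat.add_le_add_right (card_le_card (erase_subset_erase _ inter_subset_left)) 1

/-- The quadrangle `v x d c` corresponds to the pair `(c, d)`. -/
theorem quadCount_eq_sum_card {v x : V} (h : G.Adj v x) :
    G.quadCount s(v, x) =
      ∑ c ∈ (G.neighborFinset v).erase x, #(G.commonNeighborsExcept v x c) := by
  let F : (Σ _ : V, V) → Set (Sym2 V) := fun p => {s(v, x), s(x, p.2), s(p.2, p.1), s(p.1, v)}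
  set T := ((G.neighborFinset v).erase x).sigma fun c => G.commonNeighborsExcept v x c
  have hT : ∀ p, p ∈ T ↔ G.IsQuadrangleWith (F p) v x p.2 p.1 := by
    rintro ⟨c, d⟩
    simp only [T, IsQuadrangleWith, mem_sigma, mem_erase, mem_neighborFinset,
      mem_commonNeighborsExcept, List.nodup_cons, List.mem_cons, List.not_mem_nil]
    grind [G.adj_symm, G.ne_of_adj]
  have hQ : {Q | IsQuadrangle G Q ∧ s(v, x) ∈ Q} = F '' T := by
    ext Q
    constructor
    · rintro ⟨hQ, he⟩
      obtain ⟨c, d, hcd⟩ := hQ.exists_isQuadrangleWith he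
      obtain rfl : Q = F ⟨c, d⟩ := hcd.eq
      exact ⟨⟨c, d⟩, (hT _).2 hcd, rfl⟩
    · rintro ⟨p, hp, rfl⟩
      exact ⟨⟨_, _, _, _, (hT p).1 hp⟩, by simp [F]⟩
  have hinj : Set.InjOn F T := by
    rintro ⟨c, d⟩ hp ⟨c', d'⟩ hp' hF
    obtain ⟨rfl, rfl⟩ := ((hT _).1 hp).unique (hF ▸ (hT _).1 hp')
    rfl
  rw [quadCount, hQ, hinj.ncard_image, Set.ncard_coe_finset, card_sigma]

theorem card_commonNeighborsExcept_le_quadCount {v x c : V} (hvx : G.Adj v x) (hvc : G.Adj v c)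
    (hcx : c ≠ x) : #(G.commonNeighborsExcept v x c) ≤ G.quadCount s(v, x) := by
  rw [quadCount_eq_sum_card hvx]
  exact single_le_sum (f := fun c => #(G.commonNeighborsExcept v x c)) (fun _ _ => Nat.zero_le _)
    (mem_erase.2 ⟨hcx, (G.mem_neighborFinset v c).2 hvc⟩)

theorem quadCount_add_quadCount_add_two_mul_card {u w y x₁ x₂ : V} (hnd : [w, y, x₁, x₂].Nodup)
    (hN : G.neighborFinset u = {w, y, x₁, x₂}) :
    G.quadCount s(u, w) + G.quadCount s(u, y) + 2 * #(G.commonNeighborsExcept u x₁ x₂) =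
      G.quadCount s(u, x₁) + G.quadCount s(u, x₂) + 2 * #(G.commonNeighborsExcept u w y) := by
  have hadj : ∀ z ∈ ({w, y, x₁, x₂} : Finset V), G.Adj u z := fun z hz => by
    rwa [← hN, mem_neighborFinset] at hz
  simp only [List.nodup_cons, List.mem_cons, List.not_mem_nil, or_false, not_or,
    List.nodup_nil, and_true, not_false_eq_true] at hnd
  obtain ⟨⟨hwy, hwx₁, hwx₂⟩, ⟨hyx₁, hyx₂⟩, hx⟩ := hnd
  rw [quadCount_eq_sum_card (hadj w (by simp)), quadCount_eq_sum_card (hadj y (by simp)),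
    quadCount_eq_sum_card (hadj x₁ (by simp)), quadCount_eq_sum_card (hadj x₂ (by simp)), hN]
  simp only [erase_insert_eq_erase, mem_insert, hwy, hwx₁, mem_singleton, hwx₂, or_self,
    not_false_eq_true, erase_eq_of_notMem, hyx₁, hyx₂, sum_insert, hx, sum_singleton, ne_eq,
    erase_insert_of_ne, erase_singleton, insert_empty_eq]
  rw [G.commonNeighborsExcept_comm u y w, G.commonNeighborsExcept_comm u x₁ w,
    G.commonNeighborsExcept_comm u x₁ y, G.commonNeighborsExcept_comm u x₂ w,
    G.commonNeighborsExcept_comm u x₂ y, G.commonNeighborsExcept_comm u x₂ x₁]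
  ring

theorem two_le_quadCount_of_three_le_card_inter {x y z : V} (hxy : x ≠ y)
    (hz : z ∈ G.neighborFinset x ∩ G.neighborFinset y)
    (h3 : 3 ≤ #(G.neighborFinset x ∩ G.neighborFinset y)) : 2 ≤ G.quadCount s(x, z) := by
  set C := G.neighborFinset x ∩ G.neighborFinset y
  have hyz : G.Adj y z := by simpa using (mem_inter.1 hz).2
  have hy : ∀ c ∈ C.erase z, 1 ≤ #(G.commonNeighborsExcept x z c) := fun c hc => by
    simp only [C, mem_erase, mem_inter, mem_neighborFinset] at hc
    exact card_pos.2 ⟨y, mem_commonNeighborsExcept.2 ⟨hxy.symm, hyz.symm, hc.2.2.symm⟩⟩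
  rw [quadCount_eq_sum_card (by simpa using (mem_inter.1 hz).1)]
  calc 2 ≤ #(C.erase z) • 1 := by rw [card_erase_of_mem hz, smul_eq_mul]; omega
    _ ≤ ∑ c ∈ C.erase z, #(G.commonNeighborsExcept x z c) := card_nsmul_le_sum _ _ _ hy
    _ ≤ ∑ c ∈ (G.neighborFinset x).erase z, #(G.commonNeighborsExcept x z c) :=
        sum_le_sum_of_subset (erase_subset_erase _ inter_subset_left)

theorem three_le_card_filter_two_le_quadCount {x y : V} (hxy : x ≠ y)
    (h3 : 3 ≤ #(G.neighborFinset x ∩ G.neighborFinset y)) :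
    3 ≤ #{z ∈ G.neighborFinset x | 2 ≤ G.quadCount s(x, z)} :=
  h3.trans <| card_le_card fun _ hz =>
    mem_filter.2 ⟨(mem_inter.1 hz).1, two_le_quadCount_of_three_le_card_inter hxy hz h3⟩

theorem IsVertexTransitive.two_le_quadCount (hG : G.IsVertexTransitive)
    (hodd : Odd (Fintype.card V)) (hreg : G.IsRegularOfDegree 4) (hQ : IsQuadrangle G Q)
    {u w : V} (huw : G.Adj u w) : 2 ≤ G.quadCount s(u, w) := by
  by_contra! ha
  obtain ⟨y, huy, hyw, hy⟩ := hG.exists_adj_ne_eq hodd (fun φ e => quadCount_map φ e) huw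
  obtain ⟨x₁, x₂, hnd, hN⟩ := exists_nodup_eq_of_card_eq_four (hreg u)
    ((G.mem_neighborFinset u w).2 huw) ((G.mem_neighborFinset u y).2 huy) hyw.symm
  have hid := quadCount_add_quadCount_add_two_mul_card hnd hN
  simp only [List.nodup_cons, List.mem_cons, List.not_mem_nil, or_false, not_or,
    List.nodup_nil, and_true, not_false_eq_true] at hnd
  have hsum : ∑ z ∈ G.neighborFinset u, G.quadCount s(u, z) = G.quadCount s(u, w) +
      (G.quadCount s(u, y) + (G.quadCount s(u, x₁) + G.quadCount s(u, x₂))) := by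
    rw [hN, sum_insert (by simp [hnd]), sum_insert (by simp [hnd]), sum_pair hnd.2.2]
  have hux₁ : G.Adj u x₁ := by rw [← mem_neighborFinset, hN]; simp
  have hux₂ : G.Adj u x₂ := by rw [← mem_neighborFinset, hN]; simp
  have hr := card_commonNeighborsExcept_add_one_le_degree hux₁.symm x₂
  rw [hreg] at hr
  have hr2 : 2 ≤ #(G.commonNeighborsExcept u x₁ x₂) := by
    have := card_commonNeighborsExcept_le_quadCount huw huy hyw
    have := hG.eight_dvd_sum_quadCount hodd u
    have := hG.sum_quadCount_pos hQ u
    omega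
  have h3 : 3 ≤ #(G.neighborFinset x₁ ∩ G.neighborFinset x₂) := by
    rw [← card_erase_add_one (mem_inter.2 ⟨(G.mem_neighborFinset _ _).2 hux₁.symm,
      (G.mem_neighborFinset _ _).2 hux₂.symm⟩)]
    exact Nat.succ_le_succ hr2
  have hle : #{z ∈ G.neighborFinset u | 2 ≤ G.quadCount s(u, z)} ≤ 2 := by
    refine (card_le_card fun z hz => ?_).trans (card_le_two (a := x₁) (b := x₂))
    rw [mem_filter, hN] at hz
    simp only [mem_insert, mem_singleton] at hz ⊢
    obtain ⟨rfl | rfl | hz, h⟩ := hz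
    · omega
    · omega
    · exact hz
  have := hG.card_filter_neighborFinset_eq (P := fun e => 2 ≤ G.quadCount e)
    (fun φ e => by rw [quadCount_map]) u x₁
  have := three_le_card_filter_two_le_quadCount hnd.2.2 h3
  omega

end Counting

end SimpleGraph

theorem quadrangles_on_edges_general {V : Type*} [Fintype V] (G : SimpleGraph V)
    (hvt : ∀ x y : V, ∃ φ : G ≃g G, φ x = y)
    (hodd : Odd (Fintype.card V))
    (hreg : ∀ v : V, (G.neighborSet v).ncard = 4)
    (hgirth : G.girth = 4) :
    ∀ e ∈ G.edgeSet,
      2 ≤ {Q : Set (Sym2 V) | IsQuadrangle G Q ∧ e ∈ Q}.ncard ∧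
      ∃ e' ∈ G.edgeSet, e' ≠ e ∧ (∃ x : V, x ∈ e' ∧ x ∈ e) ∧
        {Q : Set (Sym2 V) | IsQuadrangle G Q ∧ e' ∈ Q}.ncard =
          {Q : Set (Sym2 V) | IsQuadrangle G Q ∧ e ∈ Q}.ncard := by
  classical
  have hG : G.IsVertexTransitive := hvt
  have hdeg : G.IsRegularOfDegree 4 := fun v => by
    rw [← hreg v, Set.ncard_eq_toFinset_card']; rfl
  obtain ⟨Q, hQ⟩ := exists_isQuadrangle_of_girth_eq_four hgirth
  rintro ⟨u, w⟩ huw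
  obtain ⟨w', huw', hne, heq⟩ := hG.exists_adj_ne_eq hodd (fun φ e => quadCount_map φ e) huw
  exact ⟨hG.two_le_quadCount hodd hdeg hQ huw, s(u, w'), huw', mt Sym2.congr_right.1 hne,
    ⟨u, Sym2.mem_mk_left _ _, Sym2.mem_mk_left _ _⟩, heq⟩

/-- In a connected vertex-transitive odd graph with degree 4 and girth 4, every edge `e` lies
in at least two quadrangles, and some edge `e'` adjacent to `e` lies in exactly as many
quadrangles as `e`. -/
theorem quadrangles_on_edges {V : Type*} [Fintype V] (G : SimpleGraph V)
    (hconn : G.Connected)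
    (hvt : ∀ x y : V, ∃ φ : G ≃g G, φ x = y)
    (hodd : Odd (Fintype.card V))
    (hreg : ∀ v : V, (G.neighborSet v).ncard = 4)
    (hgirth : G.girth = 4) :
    ∀ e ∈ G.edgeSet,
      2 ≤ {Q : Set (Sym2 V) | IsQuadrangle G Q ∧ e ∈ Q}.ncard ∧
      ∃ e' ∈ G.edgeSet, e' ≠ e ∧ (∃ x : V, x ∈ e' ∧ x ∈ e) ∧
        {Q : Set (Sym2 V) | IsQuadrangle G Q ∧ e' ∈ Q}.ncard =
          {Q : Set (Sym2 V) | IsQuadrangle G Q ∧ e ∈ Q}.ncard :=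
  quadrangles_on_edges_general G hvt hodd hreg hgirth
end

section
/- Let G be a simple connected vertex-transitive graph of odd order with even vertex degree k ≥ 4. Then G is super edge-connected: every edge-cut of G of minimum cardinality is the set ∇(v) of edges incident with some single vertex v of G. -/
open SimpleGraph

/-- An edge-cut of a connected graph: a set of edges whose removal disconnects the graph. -/
def IsEdgeCut {V : Type*} (G : SimpleGraph V) (F : Set (Sym2 V)) : Prop :=
  F ⊆ G.edgeSet ∧ ¬ (G.deleteEdges F).Connected

/-!
Let `λ` be the size of a minimum edge-cut and suppose some minimum cut `∂S` has at least two
vertices on each side. Take such a side `A` of least size (a `λ`-superatom). Submodularity and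
posimodularity of `S ↦ |∂S|` show that two distinct superatoms are disjoint: if they meet, `A ∩ B`
or `A \ B` is a smaller such side, unless `|A| = 2`, and then `|∂A| ≥ 2(k - 1) > k ≥ λ`.
So `A` is a block of imprimitivity of `Aut G`: `|A|` divides `|V|` and is odd, and the stabiliser
of `A` is transitive on `A`, so every vertex of `A` has the same number `t` of neighbours outside
`A`, and `λ = |A| t ≤ k`. Since also `k < t + |A|`, this forces `t = 1` and `|A| = k`, which
contradicts the parities.
-/

open Finset MulAction
open scoped Pointwise

namespace SimpleGraph

variable {V : Type*} [Fintype V] [DecidableEq V] {G : SimpleGraph V} [DecidableRel G.Adj]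
  {S T : Finset V}

variable (G) in
def cutSize (S : Finset V) : ℕ := #(G.interedges S Sᶜ)

variable (G) in
def cutEdges (S : Finset V) : Set (Sym2 V) :=
  (fun p ↦ s(p.1, p.2)) '' (G.interedges S Sᶜ : Set (V × V))

lemma mk_mem_cutEdges {a b : V} : s(a, b) ∈ cutEdges G S ↔ G.Adj a b ∧ (a ∈ S ↔ b ∉ S) := by
  simp only [cutEdges, Set.mem_image, mem_coe, Prod.exists, mk_mem_interedges_iff, mem_compl,
    Sym2.eq_iff]
  constructor
  · rintro ⟨c, d, ⟨hc, hd, hcd⟩, ⟨rfl, rfl⟩ | ⟨rfl, rfl⟩⟩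
    · exact ⟨hcd, by tauto⟩
    · exact ⟨hcd.symm, by tauto⟩
  · rintro ⟨hab, hS⟩
    by_cases ha : a ∈ S
    · exact ⟨a, b, ⟨ha, hS.1 ha, hab⟩, by tauto⟩
    · exact ⟨b, a, ⟨not_not.1 (mt hS.2 ha), ha, hab.symm⟩, by tauto⟩

lemma cutEdges_subset_edgeSet : cutEdges G S ⊆ G.edgeSet := by
  rintro _ ⟨⟨a, b⟩, h, rfl⟩
  exact (mk_mem_cutEdges.1 ⟨(a, b), h, rfl⟩).1

lemma cutEdges_compl : cutEdges G Sᶜ = cutEdges G S := by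
  ext e
  induction e using Sym2.ind
  simp only [mk_mem_cutEdges, mem_compl]
  tauto

lemma cutEdges_singleton (v : V) : cutEdges G {v} = G.incidenceSet v := by
  ext e
  induction e using Sym2.ind
  simp only [mk_mem_cutEdges, mk'_mem_incidenceSet_iff, mem_singleton]
  constructor
  · rintro ⟨hab, h⟩
    exact ⟨hab, by tauto⟩
  · rintro ⟨hab, rfl | rfl⟩
    · exact ⟨hab, by simpa using hab.ne'⟩
    · exact ⟨hab, by simpa using hab.ne⟩

lemma ncard_cutEdges (S : Finset V) : (cutEdges G S).ncard = cutSize G S := by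
  rw [cutSize, ← Set.ncard_coe_finset, cutEdges]
  refine Set.InjOn.ncard_image ?_
  rintro ⟨a, b⟩ hab ⟨c, d⟩ hcd h
  simp only [mem_coe, mk_mem_interedges_iff, mem_compl] at hab hcd
  rcases Sym2.eq_iff.1 h with ⟨rfl, rfl⟩ | ⟨rfl, rfl⟩
  · rfl
  · exact absurd hab.1 hcd.2.1

lemma cutSize_compl (S : Finset V) : cutSize G Sᶜ = cutSize G S := by
  rw [← ncard_cutEdges, ← ncard_cutEdges, cutEdges_compl]

lemma exists_cutEdges_eq_incidenceSet (hS : S.Nonempty) (hS' : Sᶜ.Nonempty)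
    (h : ¬ (2 ≤ #S ∧ 2 ≤ #Sᶜ)) : ∃ v, cutEdges G S = G.incidenceSet v := by
  have := hS.card_pos
  have := hS'.card_pos
  rcases (show #S = 1 ∨ #Sᶜ = 1 by omega) with h1 | h1 <;> obtain ⟨v, hv⟩ := card_eq_one.1 h1
  · exact ⟨v, by rw [hv, cutEdges_singleton]⟩
  · exact ⟨v, by rw [← cutEdges_compl, hv, cutEdges_singleton]⟩

lemma Reachable.mem_iff_of_deleteEdges_cutEdges {a b : V}
    (h : (G.deleteEdges (cutEdges G S)).Reachable a b) : a ∈ S ↔ b ∈ S := by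
  obtain ⟨w⟩ := h
  induction w with
  | nil => rfl
  | cons h _ ih =>
    rw [deleteEdges_adj, mk_mem_cutEdges] at h
    rw [← ih]
    tauto

lemma isEdgeCut_cutEdges (hS : S.Nonempty) (hS' : Sᶜ.Nonempty) : IsEdgeCut G (cutEdges G S) := by
  refine ⟨cutEdges_subset_edgeSet, fun hconn => ?_⟩
  obtain ⟨a, ha⟩ := hS
  obtain ⟨b, hb⟩ := hS'
  exact mem_compl.1 hb ((hconn.preconnected a b).mem_iff_of_deleteEdges_cutEdges.1 ha)

lemma Connected.cutSize_pos (hconn : G.Connected) (hS : S.Nonempty) (hS' : Sᶜ.Nonempty) :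
    0 < cutSize G S := by
  rw [← ncard_cutEdges, Set.ncard_pos]
  by_contra hempty
  rw [Set.not_nonempty_iff_eq_empty] at hempty
  exact (isEdgeCut_cutEdges hS hS').2 (by rwa [hempty, deleteEdges_empty])

lemma exists_cutEdges_subset_of_not_connected [Nonempty V] {F : Set (Sym2 V)}
    (hF : ¬ (G.deleteEdges F).Connected) :
    ∃ S : Finset V, S.Nonempty ∧ Sᶜ.Nonempty ∧ cutEdges G S ⊆ F := by
  classical
  obtain ⟨x, y, hxy⟩ : ∃ x y, ¬ (G.deleteEdges F).Reachable x y := by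
    by_contra! h
    exact hF ⟨h⟩
  refine ⟨({a | (G.deleteEdges F).Reachable x a} : Finset V), ⟨x, by simp⟩,
    ⟨y, by simpa using hxy⟩, ?_⟩
  rintro e h
  induction e using Sym2.ind with | _ a b
  by_contra hab
  rw [mk_mem_cutEdges] at h
  have hstep : (G.deleteEdges F).Reachable a b := (deleteEdges_adj.2 ⟨h.1, hab⟩).reachable
  simp only [mem_filter, mem_univ, true_and] at h
  by_cases ha : (G.deleteEdges F).Reachable x a
  · exact h.2.1 ha (ha.trans hstep)
  · exact ha ((not_not.1 (mt h.2.2 ha)).trans hstep.symm)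

lemma cutSize_inter_add_cutSize_union_le (S T : Finset V) :
    cutSize G (S ∩ T) + cutSize G (S ∪ T) ≤ cutSize G S + cutSize G T := by
  simp only [cutSize, ← card_union_add_card_inter (G.interedges S Sᶜ)]
  rw [← card_union_add_card_inter]
  refine add_le_add (card_le_card ?_) (card_le_card ?_) <;>
  · rintro ⟨a, b⟩
    simp only [mem_union, mem_inter, mk_mem_interedges_iff, mem_compl]
    tauto

lemma cutSize_sdiff_add_cutSize_sdiff_le (S T : Finset V) :
    cutSize G (S \ T) + cutSize G (T \ S) ≤ cutSize G S + cutSize G T := by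
  have h := cutSize_inter_add_cutSize_union_le (G := G) S Tᶜ
  rwa [cutSize_compl, ← cutSize_compl (S ∪ Tᶜ), compl_union, compl_compl, ← sdiff_eq_inter_compl,
    inter_comm, ← sdiff_eq_inter_compl] at h

lemma cutSize_eq_sum (S : Finset V) : cutSize G S = ∑ a ∈ S, #(G.neighborFinset a \ S) := by
  rw [cutSize, interedges_def, card_filter, sum_product]
  refine sum_congr rfl fun a _ => ?_
  rw [← card_filter]
  congr 1
  ext b
  simp [and_comm]

lemma cutSize_singleton (v : V) : cutSize G {v} = G.degree v := by
  rw [cutSize_eq_sum, sum_singleton, ← erase_eq,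
    erase_eq_of_notMem (G.notMem_neighborFinset_self v), card_neighborFinset_eq_degree]

lemma degree_lt_card_neighborFinset_sdiff_add_card {x : V} (hx : x ∈ S) :
    G.degree x < #(G.neighborFinset x \ S) + #S := by
  have hssub : G.neighborFinset x ∩ S ⊂ S :=
    ssubset_of_subset_of_ne inter_subset_right fun h =>
      G.notMem_neighborFinset_self x (mem_of_mem_inter_left (h ▸ hx : x ∈ _))
  rw [← card_neighborFinset_eq_degree, ← card_inter_add_card_sdiff (G.neighborFinset x) S]
  have := card_lt_card hssub
  omega

lemma card_mul_le_cutSize {k : ℕ} (hreg : G.IsRegularOfDegree k) (S : Finset V) :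
    #S * (k + 1 - #S) ≤ cutSize G S := by
  rw [cutSize_eq_sum, ← smul_eq_mul]
  refine card_nsmul_le_sum _ _ _ fun x hx => ?_
  have := degree_lt_card_neighborFinset_sdiff_add_card (G := G) hx
  rw [hreg x] at this
  omega

lemma neighborFinset_smul (φ : G ≃g G) (x : V) :
    G.neighborFinset (φ • x) = φ • G.neighborFinset x := by
  ext y
  rw [← inv_smul_mem_iff, mem_neighborFinset, mem_neighborFinset, ← φ⁻¹.map_adj_iff]
  simp

lemma card_neighborFinset_smul_sdiff_smul (φ : G ≃g G) (x : V) (S : Finset V) :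
    #(G.neighborFinset (φ • x) \ φ • S) = #(G.neighborFinset x \ S) := by
  rw [neighborFinset_smul, ← smul_finset_sdiff, card_smul_finset]

lemma cutSize_smul (φ : G ≃g G) (S : Finset V) : cutSize G (φ • S) = cutSize G S := by
  simp only [cutSize_eq_sum, smul_finset_def, sum_image fun _ _ _ _ h => MulAction.injective φ h]
  simp only [← smul_finset_def, card_neighborFinset_smul_sdiff_smul]

lemma cutSize_inter_eq_of_union_ne_univ {lam : ℕ}
    (hlam : ∀ S : Finset V, S.Nonempty → Sᶜ.Nonempty → lam ≤ cutSize G S)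
    (hS : cutSize G S = lam) (hT : cutSize G T = lam) (hint : (S ∩ T).Nonempty)
    (hU : S ∪ T ≠ univ) : cutSize G (S ∩ T) = lam := by
  obtain ⟨z, hz⟩ : ∃ z, z ∉ S ∪ T := not_forall.1 fun h => hU (eq_univ_of_forall h)
  have hinter := hlam (S ∩ T) hint ⟨z, by simp_all⟩
  have hunion := hlam (S ∪ T) (hint.mono inter_subset_union) ⟨z, mem_compl.2 hz⟩
  have := cutSize_inter_add_cutSize_union_le (G := G) S T
  omega

lemma cutSize_sdiff_eq {lam : ℕ}
    (hlam : ∀ S : Finset V, S.Nonempty → Sᶜ.Nonempty → lam ≤ cutSize G S)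
    (hS : cutSize G S = lam) (hT : cutSize G T = lam) (hST : (S \ T).Nonempty)
    (hTS : (T \ S).Nonempty) (hint : (S ∩ T).Nonempty) : cutSize G (S \ T) = lam := by
  obtain ⟨x, hx⟩ := hint
  rw [mem_inter] at hx
  have hST' := hlam (S \ T) hST ⟨x, by simp [hx.2]⟩
  have hTS' := hlam (T \ S) hTS ⟨x, by simp [hx.1]⟩
  have := cutSize_sdiff_add_cutSize_sdiff_le (G := G) S T
  omega

variable (G) in
def IsNontrivialCut (lam : ℕ) (S : Finset V) : Prop :=
  2 ≤ #S ∧ 2 ≤ #Sᶜ ∧ cutSize G S = lam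

variable (G) in
def IsSuperatom (lam : ℕ) (A : Finset V) : Prop :=
  IsNontrivialCut G lam A ∧ ∀ S, IsNontrivialCut G lam S → #A ≤ #S

section Superatom

variable {lam : ℕ} {A B : Finset V}

lemma IsNontrivialCut.exists_isSuperatom (hS : IsNontrivialCut G lam S) :
    ∃ A, IsSuperatom G lam A := by
  classical
  obtain ⟨A, hA, hmin⟩ := exists_min_image {S | IsNontrivialCut G lam S} card ⟨S, by simpa⟩
  exact ⟨A, by simpa using hA, fun S hS => hmin S (by simpa)⟩

lemma IsSuperatom.smul (hA : IsSuperatom G lam A) (φ : G ≃g G) : IsSuperatom G lam (φ • A) := by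
  obtain ⟨⟨hA2, hAc2, hAcut⟩, hmin⟩ := hA
  have hcard : #(φ • A) = #A := card_smul_finset φ A
  refine ⟨⟨hcard ▸ hA2, ?_, by rw [cutSize_smul, hAcut]⟩, fun S hS => hcard ▸ hmin S hS⟩
  rwa [card_compl, hcard, ← card_compl]

lemma IsSuperatom.card_eq_one_of_lt (hA : IsSuperatom G lam A) (hS : S.Nonempty)
    (hSc : 2 ≤ #Sᶜ) (hcut : cutSize G S = lam) (hlt : #S < #A) : #S = 1 := by
  have := hS.card_pos
  by_contra h
  exact absurd (hA.2 S ⟨by omega, hSc, hcut⟩) (by omega)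

theorem IsSuperatom.disjoint_of_ne {k : ℕ} (hreg : G.IsRegularOfDegree k) (hk : 3 ≤ k)
    (hlam : ∀ S : Finset V, S.Nonempty → Sᶜ.Nonempty → lam ≤ cutSize G S)
    (hA : IsSuperatom G lam A) (hB : IsSuperatom G lam B) (hAB : A ≠ B) : Disjoint A B := by
  rw [disjoint_iff_inter_eq_empty, ← not_nonempty_iff_eq_empty]
  intro hint
  have hcard : #A = #B := le_antisymm (hA.2 B hB.1) (hB.2 A hA.1)
  have hAsdB : (A \ B).Nonempty :=
    sdiff_nonempty.2 fun h => hAB (eq_of_subset_of_card_le h hcard.ge)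
  have hBsdA : (B \ A).Nonempty :=
    sdiff_nonempty.2 fun h => hAB (eq_of_subset_of_card_le h hcard.le).symm
  have hAB_card := card_inter_add_card_sdiff A B
  have hint_pos := hint.card_pos
  have hsd : #(A \ B) = 1 := by
    refine hA.card_eq_one_of_lt hAsdB ?_
      (cutSize_sdiff_eq hlam hA.1.2.2 hB.1.2.2 hAsdB hBsdA hint) (by omega)
    calc 2 ≤ #B := hB.1.1
      _ ≤ #(A \ B)ᶜ := card_le_card fun b hb => by simp [hb]
  by_cases hU : A ∪ B = univ
  · have hsd_eq : A \ B = Bᶜ := by rw [compl_eq_univ_sdiff, ← hU, union_sdiff_right]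
    have := hB.1.2.1
    rw [← hsd_eq] at this
    omega
  · have hicut := cutSize_inter_eq_of_union_ne_univ hlam hA.1.2.2 hB.1.2.2 hint hU
    have hi : #(A ∩ B) = 1 := by
      refine hA.card_eq_one_of_lt hint ?_ hicut (by omega)
      exact hA.1.2.1.trans (card_le_card (compl_subset_compl.2 inter_subset_left))
    obtain ⟨w, hw⟩ := card_eq_one.1 hi
    have hlamk : lam = k := by rw [← hicut, hw, cutSize_singleton, hreg]
    have hbound := card_mul_le_cutSize hreg A
    rw [show #A = 2 by omega, hA.1.2.2] at hbound
    omega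

theorem IsSuperatom.isBlock {k : ℕ} (hreg : G.IsRegularOfDegree k) (hk : 3 ≤ k)
    (hlam : ∀ S : Finset V, S.Nonempty → Sᶜ.Nonempty → lam ≤ cutSize G S)
    (hA : IsSuperatom G lam A) : IsBlock (G ≃g G) (A : Set V) := by
  rw [isBlock_iff_smul_eq_or_disjoint]
  intro φ
  rw [← coe_smul_finset, coe_inj, disjoint_coe]
  exact (eq_or_ne _ _).imp_right ((hA.smul φ).disjoint_of_ne hreg hk hlam hA)

end Superatom

lemma cutSize_eq_card_mul_of_isBlock [IsPretransitive (G ≃g G) V] {A : Finset V}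
    (hA : IsBlock (G ≃g G) (A : Set V)) {a : V} (ha : a ∈ A) :
    cutSize G A = #A * #(G.neighborFinset a \ A) := by
  rw [cutSize_eq_sum, ← smul_eq_mul, ← sum_const]
  refine sum_congr rfl fun y hy => ?_
  obtain ⟨φ, rfl⟩ := exists_smul_eq (G ≃g G) a y
  have hφ : φ • A = A := by
    rw [← coe_inj, coe_smul_finset]
    exact isBlock_iff_smul_eq_of_nonempty.1 hA ⟨φ • a, Set.smul_mem_smul_set ha, hy⟩
  conv_lhs => rw [← hφ]
  rw [card_neighborFinset_smul_sdiff_smul]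

theorem not_isNontrivialCut [IsPretransitive (G ≃g G) V] {k lam : ℕ} (hconn : G.Connected)
    (hodd : Odd (Fintype.card V)) (hreg : G.IsRegularOfDegree k) (hk : 3 ≤ k) (hkeven : Even k)
    (hlam : ∀ S : Finset V, S.Nonempty → Sᶜ.Nonempty → lam ≤ cutSize G S) :
    ¬ IsNontrivialCut G lam S := by
  intro hS
  obtain ⟨A, hA⟩ := hS.exists_isSuperatom
  have hblock := hA.isBlock hreg hk hlam
  obtain ⟨hA2, hAc2, hAcut⟩ := hA.1
  obtain ⟨a, ha⟩ : A.Nonempty := card_pos.1 (by omega)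
  obtain ⟨b, hb⟩ : Aᶜ.Nonempty := card_pos.1 (by omega)
  have hAodd : Odd #A := by
    have := hblock.ncard_dvd_card ⟨a, ha⟩
    rw [Set.ncard_coe_finset, Nat.card_eq_fintype_card] at this
    exact hodd.of_dvd_nat this
  have hlamk : lam ≤ k := by
    have hb' : b ∈ ({a} : Finset V)ᶜ := by
      simpa using fun h : b = a => (mem_compl.1 hb) (h ▸ ha)
    simpa [cutSize_singleton, hreg a] using hlam {a} (singleton_nonempty a) ⟨b, hb'⟩
  have hpos : 0 < lam := hAcut ▸ hconn.cutSize_pos ⟨a, ha⟩ ⟨b, hb⟩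
  have hdeg : k < #(G.neighborFinset a \ A) + #A :=
    hreg a ▸ degree_lt_card_neighborFinset_sdiff_add_card ha
  have hmul : lam = #A * #(G.neighborFinset a \ A) :=
    hAcut ▸ cutSize_eq_card_mul_of_isBlock hblock ha
  set t := #(G.neighborFinset a \ A)
  have ht : t = 1 := by
    have : 0 < t := Nat.pos_of_mul_pos_left (hmul ▸ hpos)
    by_contra ht
    have ht2 : 2 ≤ t := by omega
    nlinarith
  rw [ht, mul_one] at hmul
  exact Nat.not_even_iff_odd.2 hAodd (show #A = k by omega ▸ hkeven)

end SimpleGraph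

/-- A connected vertex-transitive odd graph with even degree `k ≥ 4` is super edge-connected:
every minimum edge-cut is the set of edges incident with a single vertex. -/
theorem super_edge_connected {V : Type*} [Fintype V] (G : SimpleGraph V) (k : ℕ)
    (hconn : G.Connected)
    (hvt : ∀ x y : V, ∃ φ : G ≃g G, φ x = y)
    (hodd : Odd (Fintype.card V))
    (hreg : ∀ v : V, (G.neighborSet v).ncard = k)
    (hk : 4 ≤ k)
    (hkeven : Even k) :
    ∀ F : Set (Sym2 V), IsEdgeCut G F →
      (∀ F' : Set (Sym2 V), IsEdgeCut G F' → F.ncard ≤ F'.ncard) →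
      ∃ v : V, F = G.incidenceSet v := by
  classical
  intro F hF hmin
  have : IsPretransitive (G ≃g G) V := ⟨hvt⟩
  have : Nonempty V := hconn.nonempty
  have hreg' : G.IsRegularOfDegree k := fun v =>
    (Set.ncard_eq_toFinset_card' _).symm.trans (hreg v)
  have hlam (S : Finset V) (hS : S.Nonempty) (hS' : Sᶜ.Nonempty) : F.ncard ≤ G.cutSize S :=
    ncard_cutEdges (G := G) S ▸ hmin _ (isEdgeCut_cutEdges hS hS')
  obtain ⟨S, hS, hS', hSF⟩ := exists_cutEdges_subset_of_not_connected hF.2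
  have hFS : G.cutEdges S = F :=
    Set.eq_of_subset_of_ncard_le hSF (ncard_cutEdges (G := G) S ▸ hlam S hS hS')
  have hnt : ¬ (2 ≤ #S ∧ 2 ≤ #Sᶜ) := fun h =>
    not_isNontrivialCut hconn hodd hreg' (by omega) hkeven hlam
      ⟨h.1, h.2, by rw [← ncard_cutEdges, hFS]⟩
  rw [← hFS]
  exact exists_cutEdges_eq_incidenceSet hS hS' hnt
end

section
/- Let G be a k-regular simple graph and let X be a subset of the vertex set of G with |X| ≥ 3 such that the number of edges with exactly one end in X equals 2k − 2. Then |X| ≥ k − 1. -/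
open SimpleGraph

/-- The set of edges of `G` with exactly one end in `S`. -/
def edgeBoundary {V : Type*} (G : SimpleGraph V) (S : Set V) : Set (Sym2 V) :=
  {e | e ∈ G.edgeSet ∧ ∃ x ∈ S, ∃ y ∉ S, e = s(x, y)}

/-!
A vertex `x ∈ X` has at most `|X| - 1` neighbours inside `X`, hence at least `k + 1 - |X|` outside,
and a boundary edge has only one end in `X`; double counting gives `|X| (k + 1 - |X|) ≤ 2k - 2`.
If `3 ≤ |X| ≤ k - 2`, concavity in `|X|` bounds the left side below by its common value `3 (k - 2)`
at the two endpoints, and `3 (k - 2) > 2k - 2` because `k ≥ 5`.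
-/

namespace SimpleGraph

variable {V : Type*} (G : SimpleGraph V) {S : Set V}

theorem eq_of_mem_edgeBoundary {e : Sym2 V} (he : e ∈ edgeBoundary G S) {a b : V}
    (ha : a ∈ S) (hae : a ∈ e) (hb : b ∈ S) (hbe : b ∈ e) : a = b := by
  obtain ⟨-, x, -, y, hy, rfl⟩ := he
  rcases Sym2.mem_iff.mp hae with rfl | rfl
  · rcases Sym2.mem_iff.mp hbe with rfl | rfl
    · rfl
    · exact absurd hb hy
  · exact absurd ha hy

theorem ncard_neighborSet_le_ncard_neighborSet_diff_add [Finite V] {x : V} (hx : x ∈ S) :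
    (G.neighborSet x).ncard ≤ (G.neighborSet x \ S).ncard + (S.ncard - 1) := by
  have hsub : G.neighborSet x ⊆ (G.neighborSet x \ S) ∪ (S \ {x}) := by
    intro y hy
    by_cases hyS : y ∈ S
    · exact Or.inr ⟨hyS, (G.ne_of_adj hy).symm⟩
    · exact Or.inl ⟨hy, hyS⟩
  calc (G.neighborSet x).ncard ≤ ((G.neighborSet x \ S) ∪ (S \ {x})).ncard :=
        Set.ncard_le_ncard hsub
    _ ≤ (G.neighborSet x \ S).ncard + (S \ {x}).ncard := Set.ncard_union_le _ _
    _ = (G.neighborSet x \ S).ncard + (S.ncard - 1) := by rw [Set.ncard_sdiff_singleton_of_mem hx]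

theorem ncard_mul_le_ncard_edgeBoundary [Finite V] {m : ℕ}
    (hm : ∀ x ∈ S, m ≤ (G.neighborSet x \ S).ncard) :
    S.ncard * m ≤ (edgeBoundary G S).ncard := by
  classical
  have := Fintype.ofFinite V
  rw [Set.ncard_eq_toFinset_card' S, Set.ncard_eq_toFinset_card' (edgeBoundary G S),
    ← mul_one (Set.toFinset (edgeBoundary G S)).card]
  refine Finset.card_mul_le_card_mul (fun x e => x ∈ e) (fun x hx => ?_) (fun e he => ?_)
  · rw [Set.mem_toFinset] at hx
    calc m ≤ (G.neighborSet x \ S).toFinset.card := by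
          rw [← Set.ncard_eq_toFinset_card']; exact hm x hx
      _ = ((G.neighborSet x \ S).toFinset.image (fun y => s(x, y))).card :=
          (Finset.card_image_of_injective _ (Sym2.mkEmbedding x).injective).symm
      _ ≤ _ := Finset.card_le_card fun e he' => by
          obtain ⟨y, hy, rfl⟩ := Finset.mem_image.mp he'
          rw [Set.mem_toFinset] at hy
          simp only [Finset.mem_bipartiteAbove, Set.mem_toFinset, Sym2.mem_mk_left, and_true]
          exact ⟨hy.1, x, hx, y, hy.2, rfl⟩
  · rw [Set.mem_toFinset] at he
    refine Finset.card_le_one.mpr fun a ha b hb => ?_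
    simp only [Finset.mem_bipartiteBelow, Set.mem_toFinset] at ha hb
    exact eq_of_mem_edgeBoundary G he ha.1 ha.2 hb.1 hb.2

end SimpleGraph

theorem two_mul_sub_two_lt_mul_sub_pred {n k : ℕ} (hn : 3 ≤ n) (hnk : n + 2 ≤ k) :
    2 * k - 2 < n * (k - (n - 1)) := by
  obtain ⟨a, rfl⟩ := Nat.exists_eq_add_of_le' hn
  obtain ⟨b, rfl⟩ := Nat.exists_eq_add_of_le hnk
  have hsub : a + 3 + 2 + b - (a + 3 - 1) = b + 3 := by omega
  have hlhs : 2 * (a + 3 + 2 + b) - 2 = 2 * a + 2 * b + 8 := by omega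
  rw [hsub, hlhs]
  nlinarith

/-- In a `k`-regular graph, a vertex subset `X` with `|X| ≥ 3` and `d(X) = 2k - 2`
satisfies `|X| ≥ k - 1`. -/
theorem superatom_size_lower_bound {V : Type*} [Fintype V] (G : SimpleGraph V) (k : ℕ)
    (hreg : ∀ v : V, (G.neighborSet v).ncard = k)
    (X : Set V)
    (hX : 3 ≤ X.ncard)
    (hd : (edgeBoundary G X).ncard = 2 * k - 2) :
    k - 1 ≤ X.ncard := by
  by_contra! hlt
  have hout : ∀ x ∈ X, k - (X.ncard - 1) ≤ (G.neighborSet x \ X).ncard := fun x hx => by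
    have := G.ncard_neighborSet_le_ncard_neighborSet_diff_add hx
    rw [hreg] at this
    omega
  have hcount := G.ncard_mul_le_ncard_edgeBoundary hout
  rw [hd] at hcount
  exact (two_mul_sub_two_lt_mul_sub_pred hX (by omega)).not_ge hcount
end

section
/- Let G be a simple connected vertex-transitive graph of odd order with vertex degree k ≥ 4 and girth greater than 3, and suppose G is not super restricted edge-connected. Then G has two distinct λ₂-superatoms X and Y with X ∩ Y nonempty. -/
open SimpleGraph

/-- A restricted edge-cut: an edge-cut such that every component of `G - F` has at least
2 vertices. -/
def IsRestrictedEdgeCut {V : Type*} (G : SimpleGraph V) (F : Set (Sym2 V)) : Prop :=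
  IsEdgeCut G F ∧ ∀ c : (G.deleteEdges F).ConnectedComponent, 2 ≤ c.supp.ncard

/-- The restricted edge-connectivity `λ₂(G)`. -/
noncomputable def lambda2 {V : Type*} (G : SimpleGraph V) : ℕ :=
  sInf {n | ∃ F : Set (Sym2 V), IsRestrictedEdgeCut G F ∧ F.ncard = n}

/-- The minimum edge-degree `ξ(G)`: the minimum over all edges `uv` of `d(u) + d(v) - 2`. -/
noncomputable def xi {V : Type*} (G : SimpleGraph V) : ℕ :=
  sInf {n | ∃ u v : V, G.Adj u v ∧
    n = (G.neighborSet u).ncard + (G.neighborSet v).ncard - 2}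

/-- The set of edges of `G` adjacent to the edge `e`. -/
def adjEdges {V : Type*} (G : SimpleGraph V) (e : Sym2 V) : Set (Sym2 V) :=
  {f | f ∈ G.edgeSet ∧ f ≠ e ∧ ∃ x : V, x ∈ f ∧ x ∈ e}

/-- `G` is super restricted edge-connected. -/
def SuperLambda2 {V : Type*} (G : SimpleGraph V) : Prop :=
  lambda2 G = xi G ∧
    ∀ F : Set (Sym2 V), IsRestrictedEdgeCut G F → F.ncard = lambda2 G →
      ∃ e ∈ G.edgeSet, F = adjEdges G e

/-- `X` is a `λ₂`-fragment: a proper vertex subset such that `∇(X)` is a minimum restricted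
edge-cut. -/
def IsLambda2Fragment {V : Type*} (G : SimpleGraph V) (X : Set V) : Prop :=
  X ≠ Set.univ ∧ IsRestrictedEdgeCut G (edgeBoundary G X) ∧
    (edgeBoundary G X).ncard = lambda2 G

/-- `X` is a `λ₂`-superatom: a nontrivial `λ₂`-fragment of minimum cardinality. -/
def IsLambda2Superatom {V : Type*} (G : SimpleGraph V) (X : Set V) : Prop :=
  IsLambda2Fragment G X ∧ X.ncard ≠ 2 ∧
    ∀ Y : Set V, IsLambda2Fragment G Y → Y.ncard ≠ 2 → X.ncard ≤ Y.ncard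

/-! Suppose distinct superatoms never meet. Their images under automorphisms are again
superatoms, so a superatom `X` is a block for the automorphism group, which acts transitively.
Hence `|X|` divides the odd order and is odd, and any automorphism moving one vertex of `X` to
another fixes `X`, so every vertex of `X` has the same number `d ≥ 1` of neighbours in `X`.
Thus `λ₂ = |∇X| = |X| (k - d)`, and `2d ≤ |X|` because adjacent vertices have no common
neighbour. These force `λ₂ > 2k - 2`, whereas the edges around a single edge form a restricted
edge-cut of size at most `2k - 2`. A superatom exists at all because a minimum restricted
edge-cut of a graph of odd order leaves an odd component. -/

open scoped Pointwise

section

variable {V : Type*} {G : SimpleGraph V} {X : Set V}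

lemma mk_mem_edgeBoundary_iff {x y : V} :
    s(x, y) ∈ edgeBoundary G X ↔ G.Adj x y ∧ ¬(x ∈ X ↔ y ∈ X) := by
  simp only [edgeBoundary, Set.mem_ofPred_eq, mem_edgeSet, Sym2.eq_iff]
  constructor
  · rintro ⟨hxy, a, ha, b, hb, ⟨rfl, rfl⟩ | ⟨rfl, rfl⟩⟩ <;> simp_all
  · rintro ⟨hxy, hne⟩
    by_cases hx : x ∈ X
    · exact ⟨hxy, x, hx, y, by tauto, .inl ⟨rfl, rfl⟩⟩
    · exact ⟨hxy, y, by tauto, x, hx, .inr ⟨rfl, rfl⟩⟩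

lemma deleteEdges_edgeBoundary_adj {x y : V} :
    (G.deleteEdges (edgeBoundary G X)).Adj x y ↔ G.Adj x y ∧ (x ∈ X ↔ y ∈ X) := by
  rw [deleteEdges_adj, mk_mem_edgeBoundary_iff]
  tauto

lemma SimpleGraph.Reachable.mem_iff_of_deleteEdges_edgeBoundary {x y : V}
    (h : (G.deleteEdges (edgeBoundary G X)).Reachable x y) : x ∈ X ↔ y ∈ X := by
  obtain ⟨p⟩ := h
  induction p with
  | nil => rfl
  | cons hadj _ ih => exact (deleteEdges_edgeBoundary_adj.mp hadj).2.trans ih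

lemma two_le_ncard_supp_connectedComponentMk_iff [Finite V] {H : SimpleGraph V} {v : V} :
    2 ≤ (H.connectedComponentMk v).supp.ncard ↔ ∃ w, H.Adj v w := by
  constructor
  · intro h
    obtain ⟨w, hw, hwv⟩ := Set.exists_ne_of_one_lt_ncard h v
    obtain ⟨p⟩ := (ConnectedComponent.exact hw).symm
    exact ⟨p.snd, p.adj_snd (Walk.not_nil_of_ne hwv.symm)⟩
  · rintro ⟨w, hvw⟩
    rw [← Set.ncard_pair hvw.ne]
    refine Set.ncard_le_ncard ?_
    rintro z (rfl | rfl)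
    exacts [rfl, ConnectedComponent.sound hvw.symm.reachable]

lemma IsEdgeCut.nonempty (hG : G.Connected) {F : Set (Sym2 V)} (h : IsEdgeCut G F) :
    F.Nonempty := by
  rw [Set.nonempty_iff_ne_empty]
  rintro rfl
  exact h.2 (by rwa [deleteEdges_empty])

lemma isRestrictedEdgeCut_edgeBoundary_iff [Finite V] (hG : G.Connected) :
    IsRestrictedEdgeCut G (edgeBoundary G X) ↔
      X.Nonempty ∧ Xᶜ.Nonempty ∧ ∀ v, ∃ w, G.Adj v w ∧ (v ∈ X ↔ w ∈ X) := by
  have hcomp : (∀ c : (G.deleteEdges (edgeBoundary G X)).ConnectedComponent,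
      2 ≤ c.supp.ncard) ↔ ∀ v, ∃ w, G.Adj v w ∧ (v ∈ X ↔ w ∈ X) := by
    simp only [← deleteEdges_edgeBoundary_adj, ← two_le_ncard_supp_connectedComponentMk_iff]
    exact ⟨fun h v => h _, fun h c => c.ind h⟩
  have hcut : ¬(G.deleteEdges (edgeBoundary G X)).Connected ↔ X.Nonempty ∧ Xᶜ.Nonempty := by
    constructor
    · intro h
      by_contra hX
      refine h (hG.mono fun x y hxy => deleteEdges_edgeBoundary_adj.mpr ⟨hxy, ?_⟩)
      rw [not_and_or, Set.not_nonempty_iff_eq_empty, Set.not_nonempty_iff_eq_empty,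
        Set.compl_empty_iff] at hX
      rcases hX with rfl | rfl <;> simp
    · rintro ⟨⟨x, hx⟩, ⟨y, hy⟩⟩ h
      exact hy ((Reachable.mem_iff_of_deleteEdges_edgeBoundary (h.preconnected x y)).mp hx)
  rw [IsRestrictedEdgeCut, IsEdgeCut, hcomp, hcut]
  exact ⟨fun ⟨⟨_, hX⟩, hv⟩ => ⟨hX.1, hX.2, hv⟩,
    fun ⟨hX, hXc, hv⟩ => ⟨⟨fun _ he => he.1, hX, hXc⟩, hv⟩⟩

lemma lambda2_le_ncard {F : Set (Sym2 V)} (h : IsRestrictedEdgeCut G F) : lambda2 G ≤ F.ncard :=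
  Nat.sInf_le ⟨F, h, rfl⟩

lemma exists_isRestrictedEdgeCut_ncard_eq_lambda2 {F : Set (Sym2 V)}
    (h : IsRestrictedEdgeCut G F) : ∃ F', IsRestrictedEdgeCut G F' ∧ F'.ncard = lambda2 G :=
  Nat.sInf_mem (s := {n | ∃ F, IsRestrictedEdgeCut G F ∧ F.ncard = n}) ⟨_, F, h, rfl⟩

lemma exists_isLambda2Fragment_odd_ncard [Finite V] (hG : G.Connected) (hodd : Odd (Nat.card V))
    {F : Set (Sym2 V)} (hF : IsRestrictedEdgeCut G F) :
    ∃ X, IsLambda2Fragment G X ∧ Odd X.ncard := by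
  obtain ⟨F, ⟨⟨-, hdis⟩, hcomp⟩, hFmin⟩ := exists_isRestrictedEdgeCut_ncard_eq_lambda2 hF
  set H := G.deleteEdges F
  obtain ⟨c, hc⟩ := Set.nonempty_of_ncard_ne_zero ((H.odd_ncard_oddComponents).mpr hodd).pos.ne'
  have hsub : edgeBoundary G c.supp ⊆ F := by
    rintro ⟨x, y⟩ he
    obtain ⟨hxy, hne⟩ := mk_mem_edgeBoundary_iff.mp he
    by_contra hxyF
    apply hne
    rw [c.mem_supp_iff, c.mem_supp_iff,
      ConnectedComponent.connectedComponentMk_eq_of_adj (deleteEdges_adj.mpr ⟨hxy, hxyF⟩)]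
  have hcompl : (c.suppᶜ).Nonempty := by
    by_contra hc'
    rw [Set.not_nonempty_iff_eq_empty, Set.compl_empty_iff] at hc'
    have hall (u : V) : H.connectedComponentMk u = c := (c.mem_supp_iff u).mp (hc' ▸ trivial)
    exact hdis ((connected_iff H).mpr
      ⟨fun u v => ConnectedComponent.exact ((hall u).trans (hall v).symm), ⟨c.out⟩⟩)
  have hcut : IsRestrictedEdgeCut G (edgeBoundary G c.supp) := by
    refine (isRestrictedEdgeCut_edgeBoundary_iff hG).mpr ⟨c.nonempty_supp, hcompl, fun v => ?_⟩
    obtain ⟨w, hvw⟩ :=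
      two_le_ncard_supp_connectedComponentMk_iff.mp (hcomp (H.connectedComponentMk v))
    refine ⟨w, (deleteEdges_adj.mp hvw).1, ?_⟩
    rw [c.mem_supp_iff, c.mem_supp_iff, ConnectedComponent.connectedComponentMk_eq_of_adj hvw]
  refine ⟨c.supp, ⟨fun h => ?_, hcut, ?_⟩, hc⟩
  · simp [h] at hcompl
  · exact le_antisymm (hFmin ▸ Set.ncard_le_ncard hsub) (lambda2_le_ncard hcut)

lemma exists_isLambda2Superatom (hX : IsLambda2Fragment G X) (hX2 : X.ncard ≠ 2) :
    ∃ Y, IsLambda2Superatom G Y := by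
  obtain ⟨Y, ⟨hY, hY2⟩, hmin⟩ := Nat.sInf_mem
    (s := {n | ∃ Y, (IsLambda2Fragment G Y ∧ Y.ncard ≠ 2) ∧ Y.ncard = n}) ⟨_, X, ⟨hX, hX2⟩, rfl⟩
  exact ⟨Y, hY, hY2, fun Z hZ hZ2 => hmin ▸ Nat.sInf_le ⟨Z, ⟨hZ, hZ2⟩, rfl⟩⟩

lemma adj_smul_iff (φ : G ≃g G) {x y : V} : G.Adj (φ • x) (φ • y) ↔ G.Adj x y :=
  φ.map_adj_iff

lemma neighborSet_smul (φ : G ≃g G) (x : V) : G.neighborSet (φ • x) = φ • G.neighborSet x := by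
  ext y
  rw [Set.mem_smul_set_iff_inv_smul_mem, mem_neighborSet, mem_neighborSet,
    ← adj_smul_iff φ (x := x), smul_inv_smul]

lemma edgeBoundary_smul (φ : G ≃g G) (X : Set V) :
    edgeBoundary G (φ • X) = Sym2.map φ '' edgeBoundary G X := by
  rw [Set.image_eq_preimage_of_inverse (g := Sym2.map ⇑φ⁻¹)]
  · ext e
    induction e using Sym2.ind with | h x y => ?_
    rw [Set.mem_preimage, Sym2.map_mk, mk_mem_edgeBoundary_iff, mk_mem_edgeBoundary_iff,
      Set.mem_smul_set_iff_inv_smul_mem, Set.mem_smul_set_iff_inv_smul_mem, ← φ⁻¹.map_adj_iff]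
    rfl
  · intro e
    simp [Sym2.map_map, RelIso.inv_apply_self]
  · intro e
    simp [Sym2.map_map, RelIso.apply_inv_self]

lemma IsLambda2Fragment.smul [Finite V] (hG : G.Connected) (φ : G ≃g G)
    (hX : IsLambda2Fragment G X) : IsLambda2Fragment G (φ • X) := by
  obtain ⟨-, hcut, hcard⟩ := hX
  obtain ⟨hX, hXc, hside⟩ := (isRestrictedEdgeCut_edgeBoundary_iff hG).mp hcut
  have hφXc : (φ • X)ᶜ.Nonempty := by
    rw [← Set.smul_set_compl]
    exact hXc.smul_set
  refine ⟨Set.nonempty_compl.mp hφXc,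
    (isRestrictedEdgeCut_edgeBoundary_iff hG).mpr ⟨hX.smul_set, hφXc, fun v => ?_⟩, ?_⟩
  · obtain ⟨w, hw, hvw⟩ := hside (φ⁻¹ • v)
    refine ⟨φ • w, ?_, ?_⟩
    · rwa [← adj_smul_iff φ, smul_inv_smul] at hw
    · rwa [Set.mem_smul_set_iff_inv_smul_mem, Set.smul_mem_smul_set_iff]
  · rw [edgeBoundary_smul, Set.ncard_image_of_injective _ (Sym2.map.injective φ.injective), hcard]

lemma IsLambda2Superatom.smul [Finite V] (hG : G.Connected) (φ : G ≃g G)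
    (hX : IsLambda2Superatom G X) : IsLambda2Superatom G (φ • X) := by
  obtain ⟨hX, hX2, hmin⟩ := hX
  rw [← Set.ncard_smul_set φ] at hX2 hmin
  exact ⟨hX.smul hG φ, hX2, hmin⟩

lemma isRestrictedEdgeCut_edgeBoundary_pair [Finite V] (hG : G.Connected)
    (hdeg : ∀ p, 2 < (G.neighborSet p).ncard) {u v : V} (huv : G.Adj u v) :
    IsRestrictedEdgeCut G (edgeBoundary G {u, v}) := by
  have hout (p : V) : ∃ q, G.Adj p q ∧ q ∉ ({u, v} : Set V) := by
    by_contra! h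
    have := (Set.ncard_le_ncard (show G.neighborSet p ⊆ {u, v} from h)).trans_eq
      (Set.ncard_pair huv.ne)
    linarith [hdeg p]
  refine (isRestrictedEdgeCut_edgeBoundary_iff hG).mpr
    ⟨⟨u, by simp⟩, (hout u).imp fun _ hq => hq.2, fun p => ?_⟩
  by_cases hp : p ∈ ({u, v} : Set V)
  · rcases hp with rfl | rfl
    exacts [⟨v, huv, by simp⟩, ⟨u, huv.symm, by simp⟩]
  · exact (hout p).imp fun _ hq => ⟨hq.1, iff_of_false hp hq.2⟩

lemma ncard_edgeBoundary_pair_le [Finite V] {u v : V} (huv : G.Adj u v) :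
    (edgeBoundary G {u, v}).ncard ≤
      (G.neighborSet u).ncard - 1 + ((G.neighborSet v).ncard - 1) := by
  have hsub : edgeBoundary G {u, v} ⊆
      (fun w => s(u, w)) '' (G.neighborSet u \ {v}) ∪
        (fun w => s(v, w)) '' (G.neighborSet v \ {u}) := by
    rintro e ⟨he, x, hx, y, hy, rfl⟩
    simp only [Set.mem_insert_iff, Set.mem_singleton_iff, not_or] at hx hy
    rw [mem_edgeSet] at he
    rcases hx with rfl | rfl
    · exact .inl ⟨y, ⟨he, hy.2⟩, rfl⟩
    · exact .inr ⟨y, ⟨he, hy.1⟩, rfl⟩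
  calc (edgeBoundary G {u, v}).ncard
      ≤ (G.neighborSet u \ {v}).ncard + (G.neighborSet v \ {u}).ncard :=
        (Set.ncard_le_ncard hsub).trans ((Set.ncard_union_le _ _).trans
          (add_le_add (Set.ncard_image_le (Set.toFinite _)) (Set.ncard_image_le (Set.toFinite _))))
    _ = _ := by
      rw [Set.ncard_sdiff_singleton_of_mem (show v ∈ G.neighborSet u from huv),
        Set.ncard_sdiff_singleton_of_mem (show u ∈ G.neighborSet v from huv.symm)]

lemma cliqueFree_three_of_three_lt_girth (h : 3 < G.girth) : G.CliqueFree 3 := by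
  by_contra hG
  have hK3 : (completeGraph (Fin 3)).girth = 3 := girth_top (by simp)
  have := ((G.not_cliqueFree_iff_top_isContained 3).mp hG).girth_le
    (by rw [← girth_eq_zero, hK3]; norm_num)
  omega

lemma ncard_neighborSet_inter_add_ncard_neighborSet_inter_le [Finite V] (hG : G.CliqueFree 3)
    {x y : V} (hxy : G.Adj x y) (X : Set V) :
    (G.neighborSet x ∩ X).ncard + (G.neighborSet y ∩ X).ncard ≤ X.ncard := by
  have hdisj : Disjoint (G.neighborSet x ∩ X) (G.neighborSet y ∩ X) := by
    rw [Set.disjoint_left]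
    rintro z ⟨hxz, -⟩ ⟨hyz, -⟩
    classical
    exact hG {x, y, z} (is3Clique_triple_iff.mpr ⟨hxy, hxz, hyz⟩)
  rw [← Set.ncard_union_eq hdisj]
  exact Set.ncard_le_ncard (Set.union_subset Set.inter_subset_right Set.inter_subset_right)

lemma ncard_edgeBoundary_eq_mul [Finite V] {c : ℕ}
    (h : ∀ x ∈ X, (G.neighborSet x \ X).ncard = c) :
    (edgeBoundary G X).ncard = X.ncard * c := by
  have := Fintype.ofFinite X
  let e : (Σ x : X, ↥(G.neighborSet x \ X)) ≃ edgeBoundary G X :=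
    Equiv.ofBijective
      (fun p => ⟨s(p.1, p.2), mk_mem_edgeBoundary_iff.mpr ⟨p.2.2.1, fun h => p.2.2.2 (h.mp p.1.2)⟩⟩)
      ⟨fun ⟨⟨x, hx⟩, ⟨y, hy⟩⟩ ⟨⟨x', hx'⟩, ⟨y', hy'⟩⟩ heq => by
        obtain ⟨rfl, rfl⟩ | ⟨rfl, rfl⟩ := Sym2.eq_iff.mp (Subtype.mk.inj heq)
        exacts [rfl, (hy'.2 hx).elim],
      by rintro ⟨_, he, x, hx, y, hy, rfl⟩; exact ⟨⟨⟨x, hx⟩, ⟨y, he, hy⟩⟩, rfl⟩⟩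
  rw [← Nat.card_coe_set_eq, ← Nat.card_congr e, Nat.card_sigma]
  simp only [Nat.card_coe_set_eq]
  rw [Finset.sum_congr rfl fun (a : X) _ => h a a.2, Finset.sum_const, Finset.card_univ,
    smul_eq_mul, ← Nat.card_eq_fintype_card, Nat.card_coe_set_eq]

open MulAction in
lemma IsLambda2Superatom.isBlock [Finite V] (hG : G.Connected) (hX : IsLambda2Superatom G X)
    (h : ∀ Y, IsLambda2Superatom G Y → (Y ∩ X).Nonempty → Y = X) : IsBlock (G ≃g G) X :=
  isBlock_iff_smul_eq_of_nonempty.mpr fun φ hφ => h _ (hX.smul hG φ) hφ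

open MulAction in
lemma ncard_neighborSet_smul_inter_of_isBlock (hB : IsBlock (G ≃g G) X) {φ : G ≃g G} {x : V}
    (hx : x ∈ X) (hφx : φ • x ∈ X) :
    (G.neighborSet (φ • x) ∩ X).ncard = (G.neighborSet x ∩ X).ncard := by
  have hφX : φ • X = X := hB.smul_eq_of_mem hx hφx
  rw [neighborSet_smul, ← hφX, ← Set.smul_set_inter, Set.ncard_smul_set, hφX]

lemma two_mul_sub_two_lt_mul_sub {m d k : ℕ} (hm : Odd m) (hd : 1 ≤ d) (hdm : 2 * d ≤ m)
    (hdk : d < k) : 2 * k - 2 < m * (k - d) := by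
  obtain ⟨c, rfl⟩ : ∃ c, k = d + c + 1 := ⟨k - d - 1, by omega⟩
  obtain ⟨t, rfl⟩ := hm
  rw [show d + c + 1 - d = c + 1 by omega, show 2 * (d + c + 1) - 2 = 2 * (d + c) by omega]
  have hdt : d ≤ t := by omega
  nlinarith

open MulAction in
lemma two_mul_sub_two_lt_lambda2_of_isBlock [Finite V] [IsPretransitive (G ≃g G) V] {k : ℕ}
    (hG : G.Connected) (hodd : Odd (Nat.card V)) (hreg : ∀ v, (G.neighborSet v).ncard = k)
    (htri : G.CliqueFree 3) (hX : IsLambda2Fragment G X) (hB : IsBlock (G ≃g G) X) :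
    2 * k - 2 < lambda2 G := by
  obtain ⟨-, hcut, hcard⟩ := hX
  obtain ⟨⟨x, hx⟩, -, hside⟩ := (isRestrictedEdgeCut_edgeBoundary_iff hG).mp hcut
  set d := (G.neighborSet x ∩ X).ncard
  have hdeg : ∀ y ∈ X, (G.neighborSet y ∩ X).ncard = d := by
    intro y hy
    obtain ⟨φ, rfl⟩ := exists_smul_eq (G ≃g G) x y
    exact ncard_neighborSet_smul_inter_of_isBlock hB hx hy
  have hboundary : (edgeBoundary G X).ncard = X.ncard * (k - d) := by
    refine ncard_edgeBoundary_eq_mul fun y hy => ?_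
    have := Set.ncard_inter_add_ncard_sdiff_eq_ncard (G.neighborSet y) X
    rw [hdeg y hy, hreg] at this
    omega
  obtain ⟨w, hxw, hw⟩ := hside x
  have hd : 1 ≤ d := (Set.ncard_pos (Set.toFinite _)).mpr ⟨w, hxw, hw.mp hx⟩
  have hdX : 2 * d ≤ X.ncard := by
    have := ncard_neighborSet_inter_add_ncard_neighborSet_inter_le htri hxw X
    rw [hdeg w (hw.mp hx)] at this
    omega
  have hdk : d < k := by
    have := ((Set.ncard_pos (Set.toFinite _)).mpr (hcut.1.nonempty hG)).trans_eq hboundary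
    exact Nat.sub_pos_iff_lt.mp (Nat.pos_of_mul_pos_left this)
  rw [← hcard, hboundary]
  exact two_mul_sub_two_lt_mul_sub (hodd.of_dvd_nat (hB.ncard_dvd_card ⟨x, hx⟩)) hd hdX hdk

end

theorem superatoms_intersect_general {V : Type*} [Fintype V] (G : SimpleGraph V) (k : ℕ)
    (hconn : G.Connected)
    (hvt : ∀ x y : V, ∃ φ : G ≃g G, φ x = y)
    (hodd : Odd (Fintype.card V))
    (hreg : ∀ v : V, (G.neighborSet v).ncard = k)
    (hk : 4 ≤ k)
    (hgirth : 3 < G.girth) :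
    ∃ X Y : Set V, IsLambda2Superatom G X ∧ IsLambda2Superatom G Y ∧ X ≠ Y ∧
      (X ∩ Y).Nonempty := by
  rw [← Nat.card_eq_fintype_card] at hodd
  obtain ⟨u, v, huv⟩ : ∃ u v, G.Adj u v := by
    obtain ⟨u⟩ := hconn.nonempty
    obtain ⟨v, huv⟩ := Set.nonempty_of_ncard_ne_zero (s := G.neighborSet u) (by rw [hreg]; omega)
    exact ⟨u, v, huv⟩
  have hcut := isRestrictedEdgeCut_edgeBoundary_pair hconn (fun p => by rw [hreg]; omega) huv
  have hlambda2 : lambda2 G ≤ 2 * k - 2 := by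
    have := (lambda2_le_ncard hcut).trans (ncard_edgeBoundary_pair_le huv)
    rw [hreg, hreg] at this
    omega
  obtain ⟨X₀, hX₀, hX₀odd⟩ := exists_isLambda2Fragment_odd_ncard hconn hodd hcut
  obtain ⟨X, hX⟩ := exists_isLambda2Superatom hX₀
    fun h => Nat.not_odd_iff_even.mpr even_two (h ▸ hX₀odd)
  by_contra! hdisj
  have hB := hX.isBlock hconn
    fun Y hY hYX => by_contra fun hne => hYX.ne_empty (hdisj Y X hY hX hne)
  have : MulAction.IsPretransitive (G ≃g G) V := ⟨hvt⟩
  exact (two_mul_sub_two_lt_lambda2_of_isBlock hconn hodd hreg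
    (cliqueFree_three_of_three_lt_girth hgirth) hX.1 hB).not_ge hlambda2

/-- If a connected vertex-transitive odd graph with degree `k ≥ 4` and girth greater than 3
is not super restricted edge-connected, then it has two distinct `λ₂`-superatoms with
nonempty intersection. -/
theorem superatoms_intersect {V : Type*} [Fintype V] (G : SimpleGraph V) (k : ℕ)
    (hconn : G.Connected)
    (hvt : ∀ x y : V, ∃ φ : G ≃g G, φ x = y)
    (hodd : Odd (Fintype.card V))
    (hreg : ∀ v : V, (G.neighborSet v).ncard = k)
    (hk : 4 ≤ k)
    (hgirth : 3 < G.girth)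
    (hnot : ¬ SuperLambda2 G) :
    ∃ X Y : Set V, IsLambda2Superatom G X ∧ IsLambda2Superatom G Y ∧ X ≠ Y ∧
      (X ∩ Y).Nonempty :=
  superatoms_intersect_general G k hconn hvt hodd hreg hk hgirth
end
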